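/- arXiv:2407.15183 — 8 statements merged into one kernel-verified Lean document; each statement's English description precedes it below -/
import Mathlib

section
/- Let a, b, c, e be positive integers with e ≤ c. If there exists an integer Heffter array set IHS(a, b·e; c), then there exists an integer Heffter array H(a·c, b·c; b·e, a·e). -/
/-- An integer Heffter array set `IHS(m, n; c)`. -/
def IsIHS (m n c : ℕ) (A : Fin c → Matrix (Fin m) (Fin n) ℤ) : Prop :=
  Function.Injective (fun p : Fin c × Fin m × Fin n => |A p.1 p.2.1 p.2.2|) ∧
  (∀ x : ℤ, (1 ≤ x ∧ x ≤ (m : ℤ) * n * c) ↔ ∃ l i j, |A l i j| = x) ∧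
  (∀ l i, ∑ j, A l i j = 0) ∧
  (∀ l j, ∑ i, A l i j = 0)

/-- An integer Heffter array `H(m, n; s, k)` (empty cells encoded by `0`). -/
def IsIntegerHeffterArray (m n s k : ℕ) (A : Matrix (Fin m) (Fin n) ℤ) : Prop :=
  (∀ i, (Finset.univ.filter (fun j => A i j ≠ 0)).card = s) ∧
  (∀ j, (Finset.univ.filter (fun i => A i j ≠ 0)).card = k) ∧
  (∀ i j, A i j ≠ 0 → 1 ≤ |A i j| ∧ |A i j| ≤ (n : ℤ) * (k : ℤ)) ∧
  (∀ i j i' j', A i j ≠ 0 → A i' j' ≠ 0 → |A i j| = |A i' j'| → (i, j) = (i', j')) ∧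
  (∀ i, ∑ j, A i j = 0) ∧
  (∀ j, ∑ i, A i j = 0)

/-!
Stack the arrays `A₀, …, A_{c-1}` of the integer Heffter array set as `c` row blocks of a
`c × c` grid of `a × b` blocks, and place `A_l` in the `e` consecutive column blocks
`l, l + 1, …, l + e - 1` (mod `c`). Every row of the result is a row of some `A_l`, padded with
zeros, so it has `b e` nonzero entries summing to `0`. Column block `q` meets exactly the `e`
arrays `A_{q - k}`, `k < e`, each in one full column, so every column has `a e` nonzero entries
summing to `0`. The absolute values are still exactly `1, …, a b c e`.
-/

open Finset

/-- `IsIntegerHeffterArray` over arbitrary finite index types, with `N` in place of `n * k`. -/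
structure IsHeffterMatrix {ι κ : Type*} [Fintype ι] [Fintype κ] (s k : ℕ) (N : ℤ)
    (A : Matrix ι κ ℤ) : Prop where
  card_row : ∀ i, (univ.filter fun j => A i j ≠ 0).card = s
  card_col : ∀ j, (univ.filter fun i => A i j ≠ 0).card = k
  abs_le : ∀ i j, A i j ≠ 0 → |A i j| ≤ N
  injOn_abs : ∀ i j i' j', A i j ≠ 0 → A i' j' ≠ 0 → |A i j| = |A i' j'| →
    (i, j) = (i', j')
  sum_row : ∀ i, ∑ j, A i j = 0
  sum_col : ∀ j, ∑ i, A i j = 0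

namespace IsHeffterMatrix

variable {ι κ ι' κ' : Type*} [Fintype ι] [Fintype κ] [Fintype ι'] [Fintype κ']
  {s k : ℕ} {N : ℤ} {A : Matrix ι κ ℤ}

theorem reindex (hA : IsHeffterMatrix s k N A) (eι : ι ≃ ι') (eκ : κ ≃ κ') :
    IsHeffterMatrix s k N (A.reindex eι eκ) where
  card_row i := by
    rw [← hA.card_row (eι.symm i)]
    exact card_equiv eκ.symm (fun j => by simp only [mem_filter, mem_univ, true_and]; rfl)
  card_col j := by
    rw [← hA.card_col (eκ.symm j)]
    exact card_equiv eι.symm (fun i => by simp only [mem_filter, mem_univ, true_and]; rfl)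
  abs_le _ _ := hA.abs_le _ _
  injOn_abs i j i' j' h h' habs := by
    obtain ⟨hi, hj⟩ := Prod.mk.inj (hA.injOn_abs _ _ _ _ h h' habs)
    rw [eι.symm.injective hi, eκ.symm.injective hj]
  sum_row i := (eκ.symm.sum_comp (A (eι.symm i))).trans (hA.sum_row _)
  sum_col j := (eι.symm.sum_comp (fun i => A i (eκ.symm j))).trans (hA.sum_col _)

theorem isIntegerHeffterArray {m n : ℕ} {A : Matrix (Fin m) (Fin n) ℤ}
    (hA : IsHeffterMatrix s k (n * k) A) : IsIntegerHeffterArray m n s k A :=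
  ⟨hA.card_row, hA.card_col, fun i j h => ⟨Int.one_le_abs h, hA.abs_le i j h⟩, hA.injOn_abs,
    hA.sum_row, hA.sum_col⟩

end IsHeffterMatrix

namespace IsIHS

variable {m n c : ℕ} {A : Fin c → Matrix (Fin m) (Fin n) ℤ}

theorem ne_zero (hA : IsIHS m n c A) (l i j) : A l i j ≠ 0 :=
  abs_pos.mp ((hA.2.1 _).2 ⟨l, i, j, rfl⟩).1

theorem abs_le (hA : IsIHS m n c A) (l i j) : |A l i j| ≤ m * n * c :=
  ((hA.2.1 _).2 ⟨l, i, j, rfl⟩).2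

end IsIHS

namespace Fin

variable {c e : ℕ}

theorem card_filter_val_comp_lt (hec : e ≤ c) (σ : Fin c ≃ Fin c) :
    (univ.filter fun q => (σ q : ℕ) < e).card = e := by
  rw [card_equiv σ (t := univ.filter fun m : Fin c => (m : ℕ) < e) (by simp), card_filter_val_lt,
    min_eq_right hec]

theorem sum_dite_val_lt {M : Type*} [AddCommMonoid M] (hec : e ≤ c) (g : Fin e → M) :
    ∑ m : Fin c, (if h : (m : ℕ) < e then g ⟨m, h⟩ else 0) = ∑ k, g k := by
  refine (Fintype.sum_of_injective (castLE hec) (castLE_injective hec) _ _ ?_ ?_).symm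
  · intro m hm
    rw [dif_neg]
    exact fun h => hm ⟨⟨m, h⟩, rfl⟩
  · intro k
    simp

end Fin

section CyclicPlacement

variable {a b c e : ℕ}

/-- Row `(x, l)` carries row `x` of `A l`; column `t ≃ (r, k) : Fin b × Fin e` of `A l`
goes to column `(r, l + k)`. -/
def cyclicPlacement (A : Fin c → Matrix (Fin a) (Fin (b * e)) ℤ) :
    Matrix (Fin a × Fin c) (Fin b × Fin c) ℤ := fun i j =>
  if h : ((j.2 - i.2 : Fin c) : ℕ) < e then A i.2 i.1 (finProdFinEquiv (j.1, ⟨_, h⟩)) else 0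

variable {A : Fin c → Matrix (Fin a) (Fin (b * e)) ℤ}

theorem cyclicPlacement_ne_zero_iff (hA : ∀ l x t, A l x t ≠ 0) (i j) :
    cyclicPlacement A i j ≠ 0 ↔ ((j.2 - i.2 : Fin c) : ℕ) < e := by
  unfold cyclicPlacement
  split_ifs with h
  · exact iff_of_true (hA _ _ _) h
  · exact iff_of_false (fun h0 => h0 rfl) h

theorem exists_eq_of_cyclicPlacement_ne_zero {i j} (h : cyclicPlacement A i j ≠ 0) :
    ∃ t, cyclicPlacement A i j = A i.2 i.1 t := by
  unfold cyclicPlacement at h ⊢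
  split_ifs at h ⊢
  · exact ⟨_, rfl⟩
  · exact absurd rfl h

theorem cyclicPlacement_injOn_abs [NeZero c]
    (hA : Function.Injective fun p : Fin c × Fin a × Fin (b * e) => |A p.1 p.2.1 p.2.2|)
    {i j i' j'} (h : cyclicPlacement A i j ≠ 0) (h' : cyclicPlacement A i' j' ≠ 0)
    (habs : |cyclicPlacement A i j| = |cyclicPlacement A i' j'|) : (i, j) = (i', j') := by
  rcases i with ⟨x, l⟩; rcases j with ⟨r, q⟩
  rcases i' with ⟨x', l'⟩; rcases j' with ⟨r', q'⟩
  unfold cyclicPlacement at h h' habs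
  split_ifs at h h' habs with hk hk'
  · have hpos := @hA (l, x, _) (l', x', _) habs
    simp only [Prod.mk.injEq, EmbeddingLike.apply_eq_iff_eq, Fin.mk.injEq] at hpos
    obtain ⟨rfl, rfl, rfl, hq⟩ := hpos
    rw [sub_left_inj.mp (Fin.ext hq)]
  all_goals exact absurd rfl ‹_›

theorem card_filter_cyclicPlacement_row_ne_zero [NeZero c] (hA : ∀ l x t, A l x t ≠ 0)
    (hec : e ≤ c) (i : Fin a × Fin c) :
    (univ.filter fun j => cyclicPlacement A i j ≠ 0).card = b * e := by
  simp_rw [cyclicPlacement_ne_zero_iff hA]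
  rw [← univ_product_univ, filter_product_right (fun q : Fin c => ((q - i.2 : Fin c) : ℕ) < e),
    card_product, card_univ, Fintype.card_fin]
  exact congrArg (b * ·) (Fin.card_filter_val_comp_lt hec (Equiv.subRight i.2))

theorem card_filter_cyclicPlacement_col_ne_zero [NeZero c] (hA : ∀ l x t, A l x t ≠ 0)
    (hec : e ≤ c) (j : Fin b × Fin c) :
    (univ.filter fun i => cyclicPlacement A i j ≠ 0).card = a * e := by
  simp_rw [cyclicPlacement_ne_zero_iff hA]
  rw [← univ_product_univ, filter_product_right (fun l : Fin c => ((j.2 - l : Fin c) : ℕ) < e),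
    card_product, card_univ, Fintype.card_fin]
  exact congrArg (a * ·) (Fin.card_filter_val_comp_lt hec (Equiv.subLeft j.2))

theorem sum_cyclicPlacement_row [NeZero c] (hec : e ≤ c) (i : Fin a × Fin c) :
    ∑ j, cyclicPlacement A i j = ∑ t, A i.2 i.1 t := by
  rw [← finProdFinEquiv.sum_comp, Fintype.sum_prod_type, Fintype.sum_prod_type]
  refine sum_congr rfl fun r _ => ?_
  rw [← Fin.sum_dite_val_lt hec]
  exact (Equiv.subRight i.2).sum_comp
    (fun m : Fin c => if h : (m : ℕ) < e then A i.2 i.1 (finProdFinEquiv (r, ⟨m, h⟩)) else 0)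

theorem sum_cyclicPlacement_col [NeZero c] (hec : e ≤ c) (j : Fin b × Fin c) :
    ∑ i, cyclicPlacement A i j =
      ∑ k : Fin e, ∑ x, A (j.2 - Fin.castLE hec k) x (finProdFinEquiv (j.1, k)) := by
  rw [Fintype.sum_prod_type_right, ← Fin.sum_dite_val_lt hec, ← (Equiv.subLeft j.2).sum_comp]
  refine sum_congr rfl fun m _ => ?_
  simp only [cyclicPlacement, Equiv.subLeft_apply, sub_sub_cancel, sum_dite_irrel, sum_const_zero]
  rfl

theorem IsIHS.isHeffterMatrix_cyclicPlacement [NeZero c] (hA : IsIHS a (b * e) c A)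
    (hec : e ≤ c) :
    IsHeffterMatrix (b * e) (a * e) ((b * c : ℕ) * (a * e : ℕ)) (cyclicPlacement A) where
  card_row := card_filter_cyclicPlacement_row_ne_zero hA.ne_zero hec
  card_col := card_filter_cyclicPlacement_col_ne_zero hA.ne_zero hec
  abs_le i j h := by
    obtain ⟨t, ht⟩ := exists_eq_of_cyclicPlacement_ne_zero h
    rw [ht]
    exact (hA.abs_le _ _ _).trans_eq (by push_cast; ring)
  injOn_abs _ _ _ _ := cyclicPlacement_injOn_abs hA.1
  sum_row i := (sum_cyclicPlacement_row hec i).trans (hA.2.2.1 _ _)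
  sum_col j := (sum_cyclicPlacement_col hec j).trans (sum_eq_zero fun _ _ => hA.2.2.2 _ _)

end CyclicPlacement

theorem heffter_of_IHS_general
    (a b c e : ℕ) (hc : 0 < c)
    (hec : e ≤ c)
    (h : ∃ A : Fin c → Matrix (Fin a) (Fin (b * e)) ℤ, IsIHS a (b * e) c A) :
    ∃ B : Matrix (Fin (a * c)) (Fin (b * c)) ℤ,
      IsIntegerHeffterArray (a * c) (b * c) (b * e) (a * e) B := by
  obtain ⟨A, hA⟩ := h
  have : NeZero c := ⟨hc.ne'⟩
  exact ⟨_, ((hA.isHeffterMatrix_cyclicPlacement hec).reindex finProdFinEquiv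
    finProdFinEquiv).isIntegerHeffterArray⟩

theorem heffter_of_IHS
    (a b c e : ℕ) (ha : 0 < a) (hb : 0 < b) (hc : 0 < c) (he : 0 < e)
    (hec : e ≤ c)
    (h : ∃ A : Fin c → Matrix (Fin a) (Fin (b * e)) ℤ, IsIHS a (b * e) c A) :
    ∃ B : Matrix (Fin (a * c)) (Fin (b * c)) ℤ,
      IsIntegerHeffterArray (a * c) (b * c) (b * e) (a * e) B :=
  heffter_of_IHS_general a b c e hc hec h
end

section
/- Let a, b, c, e be positive integers. If there exists an integer Heffter array set IHS(a, b; c·e), then there exists an integer Heffter array set IHS(a, b·e; c). -/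
/-! Cutting the `c * e` arrays into `c` groups of `e` and placing each group side by side gives
`c` arrays with the same entries. Every row of a new array is a concatenation of rows of old
ones, so it still sums to zero, and every column of a new array is a column of an old one. -/

theorem IsIHS.of_equiv {m n c m' n' c' : ℕ} {A : Fin c → Matrix (Fin m) (Fin n) ℤ}
    {B : Fin c' → Matrix (Fin m') (Fin n') ℤ} (hA : IsIHS m n c A)
    (σ : Fin c' × Fin m' × Fin n' ≃ Fin c × Fin m × Fin n)
    (hσ : ∀ l i j, B l i j = A (σ (l, i, j)).1 (σ (l, i, j)).2.1 (σ (l, i, j)).2.2)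
    (hrow : ∀ l i, ∑ j, B l i j = 0) (hcol : ∀ l j, ∑ i, B l i j = 0) :
    IsIHS m' n' c' B := by
  obtain ⟨hinj, hrange, -, -⟩ := hA
  have hentries : (fun p : Fin c' × Fin m' × Fin n' => |B p.1 p.2.1 p.2.2|) =
      (fun p : Fin c × Fin m × Fin n => |A p.1 p.2.1 p.2.2|) ∘ σ :=
    funext fun _ => by simp [hσ]
  have hcard : (m' : ℤ) * n' * c' = m * n * c := by
    have h : ((c' * (m' * n') : ℕ) : ℤ) = (c * (m * n) : ℕ) := by
      simpa only [Fintype.card_prod, Fintype.card_fin]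
        using congrArg Nat.cast (Fintype.card_congr σ)
    push_cast at h
    linear_combination h
  refine ⟨?_, fun x => ?_, hrow, hcol⟩
  · rw [hentries]
    exact hinj.comp σ.injective
  · rw [hcard, hrange x]
    simpa only [Prod.exists, hσ]
      using σ.surjective.exists (p := fun q => |A q.1 q.2.1 q.2.2| = x)

section ConcatCols

variable {α : Type*} {a b c e : ℕ}

/-- Array `l` of `concatCols A` is `A (l, 0) | A (l, 1) | ⋯ | A (l, e - 1)`, with `(l, k)` read
through `finProdFinEquiv`; column `finProdFinEquiv (j, k)` is column `j` of the block `A (l, k)`. -/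
def concatCols (A : Fin (c * e) → Matrix (Fin a) (Fin b) α) :
    Fin c → Matrix (Fin a) (Fin (b * e)) α :=
  fun l i j => A (finProdFinEquiv (l, (finProdFinEquiv.symm j).2)) i (finProdFinEquiv.symm j).1

def concatColsEquiv : Fin c × Fin a × Fin (b * e) ≃ Fin (c * e) × Fin a × Fin b where
  toFun p := (finProdFinEquiv (p.1, (finProdFinEquiv.symm p.2.2).2), p.2.1,
    (finProdFinEquiv.symm p.2.2).1)
  invFun q := ((finProdFinEquiv.symm q.1).1, q.2.1,
    finProdFinEquiv (q.2.2, (finProdFinEquiv.symm q.1).2))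
  left_inv := by
    rintro ⟨l, i, j⟩
    simp only [Equiv.symm_apply_apply, Prod.mk.eta, Equiv.apply_symm_apply]
  right_inv := by
    rintro ⟨l, i, j⟩
    simp only [Equiv.symm_apply_apply, Prod.mk.eta, Equiv.apply_symm_apply]

theorem concatCols_apply (A : Fin (c * e) → Matrix (Fin a) (Fin b) α) (l i j) :
    concatCols A l i j = A (concatColsEquiv (l, i, j)).1
      (concatColsEquiv (l, i, j)).2.1 (concatColsEquiv (l, i, j)).2.2 :=
  rfl

theorem sum_concatCols_row [AddCommMonoid α] (A : Fin (c * e) → Matrix (Fin a) (Fin b) α)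
    (l : Fin c) (i : Fin a) :
    ∑ j, concatCols A l i j = ∑ k, ∑ j, A (finProdFinEquiv (l, k)) i j := by
  rw [← finProdFinEquiv.sum_comp, Fintype.sum_prod_type_right]
  simp [concatCols]

end ConcatCols

theorem IHS_of_IHS_mul_general
    (a b c e : ℕ)
    (h : ∃ A : Fin (c * e) → Matrix (Fin a) (Fin b) ℤ, IsIHS a b (c * e) A) :
    ∃ B : Fin c → Matrix (Fin a) (Fin (b * e)) ℤ, IsIHS a (b * e) c B := by
  obtain ⟨A, hA⟩ := h
  obtain ⟨hrow, hcol⟩ := hA.2.2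
  refine ⟨concatCols A, hA.of_equiv concatColsEquiv (concatCols_apply A)
    (fun l i => ?_) (fun l j => hcol _ _)⟩
  simp [sum_concatCols_row, hrow]

theorem IHS_of_IHS_mul
    (a b c e : ℕ) (ha : 0 < a) (hb : 0 < b) (hc : 0 < c) (he : 0 < e)
    (h : ∃ A : Fin (c * e) → Matrix (Fin a) (Fin b) ℤ, IsIHS a b (c * e) A) :
    ∃ B : Fin c → Matrix (Fin a) (Fin (b * e)) ℤ, IsIHS a (b * e) c B :=
  IHS_of_IHS_mul_general a b c e h
end

section
/- Given α ∈ {0, 1} and integers u ≥ 1 and b ≥ 16u − 1, there exists a family of 2u integer matrices of size 3 × 3 such that: the absolute values of all 18u entries (over all matrices) are pairwise distinct and their set is exactly [1, 16u−1]₂ ∪ [2, 8u−2]₄ ∪ [b+1, b+4u] ∪ [b+10u+1, b+12u] ∪ [b+16u+1, b+18u]; every matrix in the family has all three row sums equal to 0; and every matrix has column sums equal to (4α, −2α, −2α) (first, second, third column respectively). -/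
/-!
Write `V_k` (`absTable`) for the table of nine positive integers, affine in `k`, whose entries
run, for `k = 0, …, 2u − 1`, through nine pairwise disjoint arithmetic progressions of length
`2u`. Giving `V_k` the sign pattern `(1, −1, 1)ᵀ (1, 1, −1)` yields a matrix `B_k`
(`baseMatrix`) with all line sums zero, and `A_k = (−1)^(k+1) B_k + α E`, where `E`
(`shiftMatrix`) has third row `(4, −2, −2)` and zeros elsewhere, has the required line sums.
Thanks to the alternating sign, adding `α E` moves the third row of `|A_k|` exactly onto that
of `V_(k xor α)`: for `α = 1` the third rows are swapped inside each pair `{2m, 2m + 1}`. So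
the `18u` absolute values are pairwise distinct and lie in the target set, which has at most
`18u` elements; hence they fill it.
-/

/-- `iSet d a b` is the set `[a, b]_d = {a, a + d, a + 2d, …, b}` (the integers
`x` with `a ≤ x ≤ b` and `x ≡ a (mod d)`). -/
def iSet (d a b : ℤ) : Set ℤ := {x | a ≤ x ∧ x ≤ b ∧ d ∣ (x - a)}

lemma iSet_finite (d a c : ℤ) : (iSet d a c).Finite :=
  (Set.finite_Icc a c).subset fun _ hx ↦ ⟨hx.1, hx.2.1⟩

lemma iSet_subset_image {d : ℤ} (hd : 0 < d) (a c : ℤ) :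
    iSet d a c ⊆ (fun m : ℕ ↦ a + d * m) '' Set.Iio ((c - a) / d + 1).toNat := by
  rintro x ⟨hax, hxc, m, hm⟩
  have hm0 : 0 ≤ m := by nlinarith
  have hmc : m ≤ (c - a) / d := Int.le_ediv_of_mul_le hd (by nlinarith)
  refine ⟨m.toNat, by simp only [Set.mem_Iio]; omega, ?_⟩
  simp only [Int.toNat_of_nonneg hm0]
  linarith

lemma ncard_iSet_le {d : ℤ} (hd : 0 < d) (a c : ℤ) :
    (iSet d a c).ncard ≤ ((c - a) / d + 1).toNat :=
  (Set.ncard_le_ncard (iSet_subset_image hd a c) ((Set.finite_Iio _).image _)).trans <|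
    Set.ncard_image_le (Set.finite_Iio _) |>.trans (Set.ncard_Iio_nat _).le

def targetSet (u b : ℤ) : Set ℤ :=
  iSet 2 1 (16 * u - 1) ∪ iSet 4 2 (8 * u - 2) ∪ iSet 1 (b + 1) (b + 4 * u) ∪
    iSet 1 (b + 10 * u + 1) (b + 12 * u) ∪ iSet 1 (b + 16 * u + 1) (b + 18 * u)

lemma targetSet_finite (u b : ℤ) : (targetSet u b).Finite := by
  simp only [targetSet, Set.finite_union, iSet_finite, and_self]

lemma ncard_targetSet_le (u : ℕ) (b : ℤ) : (targetSet u b).ncard ≤ 18 * u := by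
  have h₁ := ncard_iSet_le two_pos 1 (16 * (u : ℤ) - 1)
  have h₂ := ncard_iSet_le four_pos 2 (8 * (u : ℤ) - 2)
  have h₃ := ncard_iSet_le one_pos (b + 1) (b + 4 * u)
  have h₄ := ncard_iSet_le one_pos (b + 10 * u + 1) (b + 12 * u)
  have h₅ := ncard_iSet_le one_pos (b + 16 * u + 1) (b + 18 * u)
  unfold targetSet
  grw [Set.ncard_union_le, Set.ncard_union_le, Set.ncard_union_le, Set.ncard_union_le,
    h₁, h₂, h₃, h₄, h₅]
  omega

def absTable (u b k : ℤ) : Matrix (Fin 3) (Fin 3) ℤ :=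
  !![8 * u + 1 + 2 * k, b + 2 * u - k, b + 10 * u + 1 + k;
     16 * u - 1 - 2 * k, b + 2 * u + 1 + k, b + 18 * u - k;
     8 * u - 2 - 4 * k, 2 * k + 1, 8 * u - 1 - 2 * k]

lemma absTable_mem_targetSet {u b k : ℤ} (hk₀ : 0 ≤ k) (hk : k < 2 * u) (i j : Fin 3) :
    absTable u b k i j ∈ targetSet u b := by
  simp only [targetSet, iSet, Set.mem_union, Set.mem_ofPred_eq]
  fin_cases i <;> fin_cases j <;> simp [absTable] <;> omega

lemma eq_of_absTable_eq {u b k k' : ℤ} (hb : 16 * u - 1 ≤ b) (hk₀ : 0 ≤ k) (hk : k < 2 * u)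
    (hk₀' : 0 ≤ k') (hk' : k' < 2 * u) {i j i' j' : Fin 3}
    (h : absTable u b k i j = absTable u b k' i' j') : i = i' ∧ j = j' ∧ k = k' := by
  fin_cases i <;> fin_cases j <;> fin_cases i' <;> fin_cases j' <;>
    simp [absTable] at h ⊢ <;> omega

def baseMatrix (u b k : ℤ) : Matrix (Fin 3) (Fin 3) ℤ :=
  Matrix.of fun i j ↦ ![1, -1, 1] i * ![1, 1, -1] j * absTable u b k i j

def shiftMatrix : Matrix (Fin 3) (Fin 3) ℤ :=
  !![0, 0, 0; 0, 0, 0; 4, -2, -2]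

def familyMatrix (α u b : ℤ) (k : ℕ) : Matrix (Fin 3) (Fin 3) ℤ :=
  (-1) ^ (k + 1) • baseMatrix u b k + α • shiftMatrix

lemma baseMatrix_row_sum (u b k : ℤ) (i : Fin 3) : ∑ j, baseMatrix u b k i j = 0 := by
  fin_cases i <;> simp [baseMatrix, absTable, Fin.sum_univ_three] <;> ring

lemma baseMatrix_col_sum (u b k : ℤ) (j : Fin 3) : ∑ i, baseMatrix u b k i j = 0 := by
  fin_cases j <;> simp [baseMatrix, absTable, Fin.sum_univ_three] <;> ring

lemma familyMatrix_row_sum (α u b : ℤ) (k : ℕ) (i : Fin 3) :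
    ∑ j, familyMatrix α u b k i j = 0 := by
  have hshift : ∑ j, shiftMatrix i j = 0 := by
    fin_cases i <;> simp [shiftMatrix, Fin.sum_univ_three]
  simp only [familyMatrix, Matrix.add_apply, Matrix.smul_apply, smul_eq_mul,
    Finset.sum_add_distrib, ← Finset.mul_sum, baseMatrix_row_sum, hshift, mul_zero, add_zero]

lemma familyMatrix_col_sum (α u b : ℤ) (k : ℕ) (j : Fin 3) :
    ∑ i, familyMatrix α u b k i j = ![4 * α, -2 * α, -2 * α] j := by
  simp only [familyMatrix, Matrix.add_apply, Matrix.smul_apply, smul_eq_mul,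
    Finset.sum_add_distrib, ← Finset.mul_sum, baseMatrix_col_sum, mul_zero, zero_add]
  fin_cases j <;> simp [shiftMatrix, Fin.sum_univ_three] <;> ring

/-- `k xor α` for `α ∈ {0, 1}`. -/
def pairSwap (α k : ℤ) : ℤ := k + α * (1 - 2 * (k % 2))

lemma pairSwap_mem {α k u : ℤ} (hα : α = 0 ∨ α = 1) (hk₀ : 0 ≤ k) (hk : k < 2 * u) :
    0 ≤ pairSwap α k ∧ pairSwap α k < 2 * u := by
  rcases hα with rfl | rfl <;> simp only [pairSwap] <;> omega

lemma pairSwap_injective {α : ℤ} (hα : α = 0 ∨ α = 1) : Function.Injective (pairSwap α) := by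
  intro k k' h
  rcases hα with rfl | rfl <;> simp only [pairSwap] at h <;> omega

def rowIndex (α : ℤ) (k : ℕ) (i : Fin 3) : ℤ := if i = 2 then pairSwap α k else k

lemma rowIndex_mem {α u : ℤ} (hα : α = 0 ∨ α = 1) {k : ℕ} (hk : (k : ℤ) < 2 * u) (i : Fin 3) :
    0 ≤ rowIndex α k i ∧ rowIndex α k i < 2 * u := by
  unfold rowIndex
  split_ifs
  · exact pairSwap_mem hα (Int.natCast_nonneg k) hk
  · omega

lemma eq_of_rowIndex_eq {α : ℤ} (hα : α = 0 ∨ α = 1) {k k' : ℕ} {i : Fin 3}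
    (h : rowIndex α k i = rowIndex α k' i) : k = k' := by
  unfold rowIndex at h
  split_ifs at h
  · exact_mod_cast pairSwap_injective hα h
  · exact_mod_cast h

lemma abs_familyMatrix {α u b : ℤ} (hα : α = 0 ∨ α = 1) (hb : 0 ≤ b) {k : ℕ}
    (hk : (k : ℤ) < 2 * u) (i j : Fin 3) :
    |familyMatrix α u b k i j| = absTable u b (rowIndex α k i) i j := by
  rcases Nat.even_or_odd k with ⟨r, rfl⟩ | ⟨r, rfl⟩ <;> rcases hα with rfl | rfl <;>
    fin_cases i <;> fin_cases j <;>
    simp [familyMatrix, baseMatrix, shiftMatrix, absTable, rowIndex, pairSwap, pow_succ]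
  all_goals first | omega | (rw [abs_eq (by omega)]; omega)

lemma abs_familyMatrix_injective {α b : ℤ} (hα : α = 0 ∨ α = 1) {u : ℕ}
    (hb : 16 * (u : ℤ) - 1 ≤ b) :
    Function.Injective fun p : Fin (2 * u) × Fin 3 × Fin 3 ↦
      |familyMatrix α u b p.1 p.2.1 p.2.2| := by
  rintro ⟨l, i, j⟩ ⟨l', i', j'⟩ h
  have hl : (l : ℤ) < 2 * u := by have := l.isLt; omega
  have hl' : (l' : ℤ) < 2 * u := by have := l'.isLt; omega
  have hb₀ : 0 ≤ b := by omega
  simp only [abs_familyMatrix hα hb₀ hl, abs_familyMatrix hα hb₀ hl'] at h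
  obtain ⟨rfl, rfl, hrow⟩ := eq_of_absTable_eq hb (rowIndex_mem hα hl i).1
    (rowIndex_mem hα hl i).2 (rowIndex_mem hα hl' i').1 (rowIndex_mem hα hl' i').2 h
  rw [Fin.ext (eq_of_rowIndex_eq hα hrow)]

lemma range_abs_familyMatrix {α b : ℤ} (hα : α = 0 ∨ α = 1) {u : ℕ}
    (hb : 16 * (u : ℤ) - 1 ≤ b) :
    Set.range (fun p : Fin (2 * u) × Fin 3 × Fin 3 ↦ |familyMatrix α u b p.1 p.2.1 p.2.2|) =
      targetSet u b := by
  refine Set.eq_of_subset_of_ncard_le ?_ ?_ (targetSet_finite u b)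
  · rintro _ ⟨⟨l, i, j⟩, rfl⟩
    have hl : (l : ℤ) < 2 * u := by have := l.isLt; omega
    simp only [abs_familyMatrix hα (by omega : 0 ≤ b) hl]
    exact absTable_mem_targetSet (rowIndex_mem hα hl i).1 (rowIndex_mem hα hl i).2 i j
  · rw [Set.ncard_range_of_injective (abs_familyMatrix_injective hα hb)]
    simp only [Nat.card_eq_fintype_card, Fintype.card_prod, Fintype.card_fin]
    linarith [ncard_targetSet_le u b]

theorem exists_A_alpha_general
    (α : ℤ) (hα : α = 0 ∨ α = 1) (u : ℕ)
    (b : ℤ) (hb : 16 * (u : ℤ) - 1 ≤ b) :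
    ∃ A : Fin (2 * u) → Matrix (Fin 3) (Fin 3) ℤ,
      Function.Injective (fun p : Fin (2 * u) × Fin 3 × Fin 3 => |A p.1 p.2.1 p.2.2|) ∧
      {x : ℤ | ∃ l i j, |A l i j| = x} =
        iSet 2 1 (16 * (u : ℤ) - 1) ∪ iSet 4 2 (8 * (u : ℤ) - 2) ∪
        iSet 1 (b + 1) (b + 4 * (u : ℤ)) ∪
        iSet 1 (b + 10 * (u : ℤ) + 1) (b + 12 * (u : ℤ)) ∪
        iSet 1 (b + 16 * (u : ℤ) + 1) (b + 18 * (u : ℤ)) ∧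
      (∀ l i, ∑ j, A l i j = 0) ∧
      (∀ l, ∑ i, A l i 0 = 4 * α ∧ ∑ i, A l i 1 = -2 * α ∧ ∑ i, A l i 2 = -2 * α) := by
  refine ⟨fun l ↦ familyMatrix α u b l, abs_familyMatrix_injective hα hb, ?_,
    fun l i ↦ familyMatrix_row_sum α u b l i,
    fun l ↦ ⟨familyMatrix_col_sum α u b l 0, familyMatrix_col_sum α u b l 1,
      familyMatrix_col_sum α u b l 2⟩⟩
  rw [← targetSet, ← range_abs_familyMatrix hα hb]
  ext x
  simp only [Set.mem_ofPred_eq, Set.mem_range, Prod.exists]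

theorem exists_A_alpha
    (α : ℤ) (hα : α = 0 ∨ α = 1) (u : ℕ) (hu : 1 ≤ u)
    (b : ℤ) (hb : 16 * (u : ℤ) - 1 ≤ b) :
    ∃ A : Fin (2 * u) → Matrix (Fin 3) (Fin 3) ℤ,
      Function.Injective (fun p : Fin (2 * u) × Fin 3 × Fin 3 => |A p.1 p.2.1 p.2.2|) ∧
      {x : ℤ | ∃ l i j, |A l i j| = x} =
        iSet 2 1 (16 * (u : ℤ) - 1) ∪ iSet 4 2 (8 * (u : ℤ) - 2) ∪
        iSet 1 (b + 1) (b + 4 * (u : ℤ)) ∪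
        iSet 1 (b + 10 * (u : ℤ) + 1) (b + 12 * (u : ℤ)) ∪
        iSet 1 (b + 16 * (u : ℤ) + 1) (b + 18 * (u : ℤ)) ∧
      (∀ l i, ∑ j, A l i j = 0) ∧
      (∀ l, ∑ i, A l i 0 = 4 * α ∧ ∑ i, A l i 1 = -2 * α ∧ ∑ i, A l i 2 = -2 * α) :=
  exists_A_alpha_general α hα u b hb
end

section
/- Given integers u ≥ 1 and b ≥ 8u + 24, there exists a family of u integer matrices of size 3 × 3 such that: the absolute values of all 9u entries (over all matrices) are pairwise distinct and their set is exactly [9, 2u+7]₂ ∪ [10, 4u+6]₄ ∪ [2u+17, 6u+15]₂ ∪ [6u+25, 8u+23]₂ ∪ [b, b+u−1] ∪ [b+u+8, b+2u+7] ∪ [b+5u+16, b+6u+15] ∪ [b+8u+32, b+9u+31]; and every matrix in the family has all row sums and all column sums equal to 0. -/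
/-!
The `k`-th matrix (`0 ≤ k < u`) is a fixed sign pattern applied entrywise to a matrix of
nonnegative entries, each an arithmetic progression in `k`; the pattern makes every row and
column sum vanish identically in `k`. As `k` runs over `[0, u)`, the nine progressions sweep out
the prescribed sets, `[2u+17, 6u+15]₂` being the union of two of them. They never collide: they
are separated by size or by parity, and `b ≥ 8u + 24` puts the four progressions involving `b`
above all the others.
-/

theorem exists_fin_add_mul_eq_iff {d a c : ℤ} {u : ℕ} (hd : 0 < d) (hc : a + d * (u - 1) = c)
    (x : ℤ) : (∃ k : Fin u, a + d * k = x) ↔ x ∈ iSet d a c := by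
  constructor
  · rintro ⟨k, rfl⟩
    have hk : (k : ℤ) ≤ u - 1 := by omega
    exact ⟨by nlinarith, by nlinarith, ⟨k, by ring⟩⟩
  · rintro ⟨hax, hxc, m, hm⟩
    have hm0 : 0 ≤ m := nonneg_of_mul_nonneg_right (by linarith) hd
    have hmu : m ≤ u - 1 := le_of_mul_le_mul_left (by linarith) hd
    exact ⟨⟨m.toNat, by omega⟩, by simp [hm0]; linarith⟩

theorem exists_fin_sub_mul_eq_iff {d a c : ℤ} {u : ℕ} (hd : 0 < d) (hc : a + d * (u - 1) = c)
    (x : ℤ) : (∃ k : Fin u, c - d * k = x) ↔ x ∈ iSet d a c := by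
  rw [← exists_fin_add_mul_eq_iff hd hc, Fin.rev_surjective.exists]
  refine exists_congr fun k => ?_
  have hk := k.isLt
  rw [Fin.val_rev, Nat.cast_sub hk, ← hc]
  push_cast
  constructor <;> intro h <;> linarith

theorem iSet_union_iSet {d a c c' e : ℤ} (hc' : c + d = c') (hac : a ≤ c')
    (hce : c ≤ e) (hdvd : d ∣ c - a) : iSet d a c ∪ iSet d c' e = iSet d a e := by
  ext x
  simp only [iSet, Set.mem_union, Set.mem_ofPred_eq]
  constructor
  · rintro (⟨hax, hxc, hx⟩ | ⟨hcx, hxe, hx⟩)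
    · exact ⟨hax, hxc.trans hce, hx⟩
    · refine ⟨hac.trans hcx, hxe, ?_⟩
      rw [show x - a = (x - c') + d + (c - a) by omega]
      exact dvd_add (dvd_add hx dvd_rfl) hdvd
  · rintro ⟨hax, hxe, hx⟩
    by_cases hxc : x ≤ c
    · exact Or.inl ⟨hax, hxc, hx⟩
    · have hdx : d ∣ x - c := by simpa using dvd_sub hx hdvd
      have := Int.le_of_dvd (by omega) hdx
      refine Or.inr ⟨by omega, hxe, ?_⟩
      rw [show x - c' = (x - c) - d by omega]
      exact dvd_sub hdx dvd_rfl

namespace ZeroSumBlock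

open Matrix

def absEntries (u : ℕ) (b k : ℤ) : Matrix (Fin 3) (Fin 3) ℤ :=
  !![9 + 2 * k, 4 * u + 6 - 4 * k, 4 * u + 15 - 2 * k;
     b + u - 1 - k, 4 * u + 17 + 2 * k, b + 5 * u + 16 + k;
     b + u + 8 + k, 8 * u + 23 - 2 * k, b + 9 * u + 31 - k]

def signs : Matrix (Fin 3) (Fin 3) ℤ := !![1, 1, -1; 1, 1, -1; -1, -1, 1]

def block (u : ℕ) (b k : ℤ) : Matrix (Fin 3) (Fin 3) ℤ := signs ⊙ absEntries u b k

theorem block_row_sum (u : ℕ) (b k : ℤ) (i : Fin 3) : ∑ j, block u b k i j = 0 := by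
  fin_cases i <;> simp [block, signs, absEntries, Fin.sum_univ_three] <;> ring

theorem block_col_sum (u : ℕ) (b k : ℤ) (j : Fin 3) : ∑ i, block u b k i j = 0 := by
  fin_cases j <;> simp [block, signs, absEntries, Fin.sum_univ_three] <;> ring

theorem absEntries_nonneg {u : ℕ} {b k : ℤ} (hb : 0 ≤ b) (hk : 0 ≤ k) (hku : k < u)
    (i j : Fin 3) : 0 ≤ absEntries u b k i j := by
  fin_cases i <;> fin_cases j <;> simp [absEntries] <;> omega

theorem abs_block {u : ℕ} {b : ℤ} (hb : 0 ≤ b) (k : Fin u) (i j : Fin 3) :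
    |block u b k i j| = absEntries u b k i j := by
  have hsign : |signs i j| = 1 := by fin_cases i <;> fin_cases j <;> simp [signs]
  rw [block, hadamard_apply, abs_mul, hsign, one_mul,
    abs_of_nonneg (absEntries_nonneg hb k.val.cast_nonneg (by exact_mod_cast k.isLt) i j)]

theorem absEntries_injective {u : ℕ} {b : ℤ} (hb : 8 * u + 24 ≤ b) :
    Function.Injective fun p : Fin u × Fin 3 × Fin 3 => absEntries u b p.1 p.2.1 p.2.2 := by
  rintro ⟨k, i, j⟩ ⟨k', i', j'⟩ h
  have hk := k.isLt
  have hk' := k'.isLt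
  fin_cases i <;> fin_cases j <;> fin_cases i' <;> fin_cases j' <;>
    simp [absEntries, Fin.ext_iff] at h ⊢ <;> omega

theorem setOf_abs_block_eq {u : ℕ} {b : ℤ} (hb : 0 ≤ b) :
    {x | ∃ (k : Fin u) (i j : Fin 3), |block u b k i j| = x} =
      iSet 2 9 (2 * (u : ℤ) + 7) ∪ iSet 4 10 (4 * (u : ℤ) + 6) ∪
      iSet 2 (2 * (u : ℤ) + 17) (6 * (u : ℤ) + 15) ∪
      iSet 2 (6 * (u : ℤ) + 25) (8 * (u : ℤ) + 23) ∪
      iSet 1 b (b + (u : ℤ) - 1) ∪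
      iSet 1 (b + (u : ℤ) + 8) (b + 2 * (u : ℤ) + 7) ∪
      iSet 1 (b + 5 * (u : ℤ) + 16) (b + 6 * (u : ℤ) + 15) ∪
      iSet 1 (b + 8 * (u : ℤ) + 32) (b + 9 * (u : ℤ) + 31) := by
  have hsplit : iSet 2 (2 * u + 17) (4 * u + 15) ∪ iSet 2 (4 * u + 17) (6 * u + 15) =
      iSet 2 (2 * u + 17) (6 * u + 15) :=
    iSet_union_iSet (by ring) (by omega) (by omega) ⟨u - 1, by ring⟩
  ext x
  have h00 : (∃ k : Fin u, 9 + 2 * (k : ℤ) = x) ↔ x ∈ iSet 2 9 (2 * u + 7) :=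
    exists_fin_add_mul_eq_iff two_pos (by ring) x
  have h01 : (∃ k : Fin u, 4 * u + 6 - 4 * (k : ℤ) = x) ↔ x ∈ iSet 4 10 (4 * u + 6) :=
    exists_fin_sub_mul_eq_iff four_pos (by ring) x
  have h02 : (∃ k : Fin u, 4 * u + 15 - 2 * (k : ℤ) = x) ↔
      x ∈ iSet 2 (2 * u + 17) (4 * u + 15) :=
    exists_fin_sub_mul_eq_iff two_pos (by ring) x
  have h10 : (∃ k : Fin u, b + u - 1 - (k : ℤ) = x) ↔ x ∈ iSet 1 b (b + u - 1) := by
    simpa only [one_mul] using exists_fin_sub_mul_eq_iff one_pos (by ring) x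
  have h11 : (∃ k : Fin u, 4 * u + 17 + 2 * (k : ℤ) = x) ↔
      x ∈ iSet 2 (4 * u + 17) (6 * u + 15) :=
    exists_fin_add_mul_eq_iff two_pos (by ring) x
  have h12 : (∃ k : Fin u, b + 5 * u + 16 + (k : ℤ) = x) ↔
      x ∈ iSet 1 (b + 5 * u + 16) (b + 6 * u + 15) := by
    simpa only [one_mul] using exists_fin_add_mul_eq_iff one_pos (by ring) x
  have h20 : (∃ k : Fin u, b + u + 8 + (k : ℤ) = x) ↔
      x ∈ iSet 1 (b + u + 8) (b + 2 * u + 7) := by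
    simpa only [one_mul] using exists_fin_add_mul_eq_iff one_pos (by ring) x
  have h21 : (∃ k : Fin u, 8 * u + 23 - 2 * (k : ℤ) = x) ↔
      x ∈ iSet 2 (6 * u + 25) (8 * u + 23) :=
    exists_fin_sub_mul_eq_iff two_pos (by ring) x
  have h22 : (∃ k : Fin u, b + 9 * u + 31 - (k : ℤ) = x) ↔
      x ∈ iSet 1 (b + 8 * u + 32) (b + 9 * u + 31) := by
    simpa only [one_mul] using exists_fin_sub_mul_eq_iff one_pos (by ring) x
  simp only [Set.mem_ofPred_eq, abs_block hb, Fin.exists_fin_succ, exists_or,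
    Fin.exists_fin_zero, or_false, Fin.succ_zero_eq_one, Fin.succ_one_eq_two, absEntries, of_apply,
    cons_val', cons_val_zero, cons_val_one, cons_val_two, vecHead, tail_cons, h00, h01, h02, h10,
    h11, h12, h20, h21, h22, ← hsplit, Set.mem_union]
  simp only [or_assoc, or_left_comm, or_comm]

end ZeroSumBlock

theorem exists_A_two_general
    (u : ℕ) (b : ℤ) (hb : 8 * (u : ℤ) + 24 ≤ b) :
    ∃ A : Fin u → Matrix (Fin 3) (Fin 3) ℤ,
      Function.Injective (fun p : Fin u × Fin 3 × Fin 3 => |A p.1 p.2.1 p.2.2|) ∧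
      {x : ℤ | ∃ l i j, |A l i j| = x} =
        iSet 2 9 (2 * (u : ℤ) + 7) ∪ iSet 4 10 (4 * (u : ℤ) + 6) ∪
        iSet 2 (2 * (u : ℤ) + 17) (6 * (u : ℤ) + 15) ∪
        iSet 2 (6 * (u : ℤ) + 25) (8 * (u : ℤ) + 23) ∪
        iSet 1 b (b + (u : ℤ) - 1) ∪
        iSet 1 (b + (u : ℤ) + 8) (b + 2 * (u : ℤ) + 7) ∪
        iSet 1 (b + 5 * (u : ℤ) + 16) (b + 6 * (u : ℤ) + 15) ∪
        iSet 1 (b + 8 * (u : ℤ) + 32) (b + 9 * (u : ℤ) + 31) ∧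
      (∀ l i, ∑ j, A l i j = 0) ∧
      (∀ l j, ∑ i, A l i j = 0) := by
  have hb0 : 0 ≤ b := by omega
  refine ⟨fun l => ZeroSumBlock.block u b l, ?_, ZeroSumBlock.setOf_abs_block_eq hb0,
    fun l => ZeroSumBlock.block_row_sum u b l, fun l => ZeroSumBlock.block_col_sum u b l⟩
  simpa only [ZeroSumBlock.abs_block hb0] using ZeroSumBlock.absEntries_injective hb

theorem exists_A_two
    (u : ℕ) (hu : 1 ≤ u) (b : ℤ) (hb : 8 * (u : ℤ) + 24 ≤ b) :
    ∃ A : Fin u → Matrix (Fin 3) (Fin 3) ℤ,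
      Function.Injective (fun p : Fin u × Fin 3 × Fin 3 => |A p.1 p.2.1 p.2.2|) ∧
      {x : ℤ | ∃ l i j, |A l i j| = x} =
        iSet 2 9 (2 * (u : ℤ) + 7) ∪ iSet 4 10 (4 * (u : ℤ) + 6) ∪
        iSet 2 (2 * (u : ℤ) + 17) (6 * (u : ℤ) + 15) ∪
        iSet 2 (6 * (u : ℤ) + 25) (8 * (u : ℤ) + 23) ∪
        iSet 1 b (b + (u : ℤ) - 1) ∪
        iSet 1 (b + (u : ℤ) + 8) (b + 2 * (u : ℤ) + 7) ∪
        iSet 1 (b + 5 * (u : ℤ) + 16) (b + 6 * (u : ℤ) + 15) ∪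
        iSet 1 (b + 8 * (u : ℤ) + 32) (b + 9 * (u : ℤ) + 31) ∧
      (∀ l i, ∑ j, A l i j = 0) ∧
      (∀ l j, ∑ i, A l i j = 0) :=
  exists_A_two_general u b hb
end

section
/- Given integers b, ℓ, u with ℓ ≥ u ≥ 0 and b ≥ 10ℓ, there exists a family 𝔅 of 2 × 3 integer matrices that is the disjoint union of two subfamilies 𝔅⁰ and 𝔅¹ such that: |𝔅⁰| = 2(ℓ − u) and |𝔅¹| = 2u; every matrix in 𝔅⁰ has row sums (0, 0) and column sums (−4, 2, 2); every matrix in 𝔅¹ has row sums (2, −2) and column sums (−4, 2, 2); and the absolute values of all entries of 𝔅 are pairwise distinct with set exactly [b−6ℓ+1, b+2ℓ] ∪ [2b−8ℓ+2, 2b]₂. -/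
namespace TwoByThree

open Function

def blockEquiv {l u : ℕ} (hul : u ≤ l) : Fin (2 * (l - u)) ⊕ Fin (2 * u) ≃ Fin 2 × Fin l :=
  (Equiv.sumCongr finProdFinEquiv.symm finProdFinEquiv.symm).trans <|
    (Equiv.prodSumDistrib _ _ _).symm.trans <|
      Equiv.prodCongr (Equiv.refl _) (finSumFinEquiv.trans (finCongr (Nat.sub_add_cancel hul)))

theorem blockEquiv_inl_snd_lt {l u : ℕ} (hul : u ≤ l) (p : Fin (2 * (l - u))) :
    ((blockEquiv hul (.inl p)).2 : ℕ) < l - u := by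
  simpa [blockEquiv] using Nat.mod_lt p (by have := p.isLt; omega : 0 < l - u)

theorem le_blockEquiv_inr_snd {l u : ℕ} (hul : u ≤ l) (p : Fin (2 * u)) :
    l - u ≤ ((blockEquiv hul (.inr p)).2 : ℕ) := by
  simp [blockEquiv]

def tile (s r t : ℤ) : Matrix (Fin 2) (Fin 3) ℤ := !![-(s + 4), r + 2, t + 2; s, -r, -t]

theorem sum_tile_col (s r t : ℤ) (j : Fin 3) : ∑ i, tile s r t i j = ![-4, 2, 2] j := by
  fin_cases j <;> simp [tile, Fin.sum_univ_two]

theorem sum_tile_row_zero (s r t : ℤ) : ∑ j, tile s r t 0 j = r + t - s := by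
  simp only [tile, Fin.sum_univ_three, Matrix.of_apply, Matrix.cons_val', Matrix.cons_val_fin_one,
    Matrix.cons_val_zero, Matrix.cons_val_one, Matrix.cons_val]
  ring

theorem sum_tile_row_one (s r t : ℤ) : ∑ j, tile s r t 1 j = s - r - t := by
  simp only [tile, Fin.sum_univ_three, Matrix.of_apply, Matrix.cons_val', Matrix.cons_val_fin_one,
    Matrix.cons_val_zero, Matrix.cons_val_one, Matrix.cons_val]
  ring

variable (l : ℕ) (b : ℤ)

def tableValue (j : Fin 3) (k m : ℕ) : ℤ :=
  ![2 * b - 8 * l + 2 + 8 * k + 2 * m, b - 6 * l + 1 + 4 * k + m, b - 2 * l + 1 + 4 * k + m] j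

theorem tableValue_injective (hb : 10 * (l : ℤ) ≤ b) :
    Injective fun x : Fin 3 × Fin l × Fin 4 => tableValue l b x.1 x.2.1 x.2.2 := by
  rintro ⟨j, k, m⟩ ⟨j', k', m'⟩ h
  fin_cases j <;> fin_cases j' <;> simp [tableValue, Fin.ext_iff] at h ⊢ <;> omega

theorem range_tableValue :
    Set.range (fun x : Fin 3 × Fin l × Fin 4 => tableValue l b x.1 x.2.1 x.2.2) =
      iSet 1 (b - 6 * l + 1) (b + 2 * l) ∪ iSet 2 (2 * b - 8 * l + 2) (2 * b) := by
  ext x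
  simp only [Set.mem_range, Prod.exists, iSet, Set.mem_union, Set.mem_ofPred_eq]
  constructor
  · rintro ⟨j, k, m, rfl⟩
    fin_cases j <;> simp [tableValue] <;> omega
  · rintro (⟨h₁, h₂, -⟩ | ⟨h₁, h₂, z, hz⟩)
    · obtain ⟨n, rfl⟩ : ∃ n : ℕ, x = b - 6 * l + 1 + n :=
        ⟨(x - (b - 6 * l + 1)).toNat, by omega⟩
      rcases lt_or_ge n (4 * l) with hn | hn
      · exact ⟨1, ⟨n / 4, by omega⟩, ⟨n % 4, by omega⟩, by simp [tableValue]; omega⟩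
      · exact ⟨2, ⟨(n - 4 * l) / 4, by omega⟩, ⟨(n - 4 * l) % 4, by omega⟩,
          by simp [tableValue]; omega⟩
    · exact ⟨0, ⟨z.toNat / 4, by omega⟩, ⟨z.toNat % 4, by omega⟩,
        by simp [tableValue]; omega⟩

def blockTile (k a d : ℕ) : Matrix (Fin 2) (Fin 3) ℤ :=
  tile (tableValue l b 0 k a) (tableValue l b 1 k d) (tableValue l b 2 k d)

theorem sum_blockTile_row_zero (k a d : ℕ) : ∑ j, blockTile l b k a d 0 j = 2 * (d - a) := by
  simp only [blockTile, sum_tile_row_zero, tableValue, Matrix.cons_val_zero, Matrix.cons_val_one,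
    Matrix.cons_val]
  ring

theorem sum_blockTile_row_one (k a d : ℕ) : ∑ j, blockTile l b k a d 1 j = 2 * (a - d) := by
  simp only [blockTile, sum_tile_row_one, tableValue, Matrix.cons_val_zero, Matrix.cons_val_one,
    Matrix.cons_val]
  ring

theorem abs_blockTile (hb : 6 * (l : ℤ) ≤ b) (k a d : ℕ) (i : Fin 2) (j : Fin 3) :
    |blockTile l b k a d i j| =
      tableValue l b j k ((if j = 0 then a else d) + if i = 0 then 2 else 0) := by
  fin_cases i <;> fin_cases j <;> simp [blockTile, tile, tableValue]
  all_goals first | omega | (rw [abs_eq (by omega)]; omega)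

def blockMatrix (c : Bool) (k : ℕ) (e : Fin 2) : Matrix (Fin 2) (Fin 3) ℤ :=
  if c then ![blockTile l b k 0 1, (blockTile l b k 1 0).submatrix Fin.rev id] e
  else blockTile l b k e e

theorem sum_blockMatrix_col (c : Bool) (k : ℕ) (e : Fin 2) (j : Fin 3) :
    ∑ i, blockMatrix l b c k e i j = ![-4, 2, 2] j := by
  cases c
  · exact sum_tile_col ..
  · fin_cases e
    · exact sum_tile_col ..
    · exact (Equiv.sum_comp Fin.revPerm fun i => blockTile l b k 1 0 i j).trans (sum_tile_col ..)

theorem sum_blockMatrix_false_row (k : ℕ) (e i : Fin 2) :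
    ∑ j, blockMatrix l b false k e i j = 0 := by
  fin_cases i <;> simp [blockMatrix, sum_blockTile_row_zero, sum_blockTile_row_one]

theorem sum_blockMatrix_true_row_zero (k : ℕ) (e : Fin 2) :
    ∑ j, blockMatrix l b true k e 0 j = 2 := by
  fin_cases e <;> simp [blockMatrix, sum_blockTile_row_zero, sum_blockTile_row_one]

theorem sum_blockMatrix_true_row_one (k : ℕ) (e : Fin 2) :
    ∑ j, blockMatrix l b true k e 1 j = -2 := by
  fin_cases e <;> simp [blockMatrix, sum_blockTile_row_zero, sum_blockTile_row_one]

-- The slot `m` of column `j` of the block that `abs_blockTile` assigns to entry `(i, j)`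
-- of matrix `e`.
def position (c : Bool) (e i : Fin 2) (j : Fin 3) : ℕ :=
  if c then ![(if j = 0 then 0 else 1) + (if i = 0 then 2 else 0),
    (if j = 0 then 1 else 0) + (if i = 1 then 2 else 0)] e
  else e + if i = 0 then 2 else 0

theorem position_lt_four (c : Bool) (e i : Fin 2) (j : Fin 3) : position c e i j < 4 := by
  revert c e i j; decide

theorem position_injective (c : Bool) (j : Fin 3) :
    Injective fun x : Fin 2 × Fin 2 => position c x.1 x.2 j := by
  revert c j; decide

theorem abs_blockMatrix (hb : 6 * (l : ℤ) ≤ b) (c : Bool) (k : ℕ) (e i : Fin 2) (j : Fin 3) :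
    |blockMatrix l b c k e i j| = tableValue l b j k (position c e i j) := by
  cases c <;> fin_cases e <;> fin_cases i <;> simp [blockMatrix, position, abs_blockTile l b hb]

def tableIndex (c : Fin l → Bool) (x : (Fin 2 × Fin l) × Fin 2 × Fin 3) :
    Fin 3 × Fin l × Fin 4 :=
  (x.2.2, x.1.2, ⟨position (c x.1.2) x.1.1 x.2.1 x.2.2, position_lt_four ..⟩)

theorem tableIndex_bijective (c : Fin l → Bool) : Bijective (tableIndex l c) := by
  refine (Fintype.bijective_iff_injective_and_card _).2 ⟨?_, by simp [Fintype.card_prod]; ring⟩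
  rintro ⟨⟨e, k⟩, i, j⟩ ⟨⟨e', k'⟩, i', j'⟩ h
  simp only [tableIndex, Prod.mk.injEq, Fin.mk.injEq] at h
  obtain ⟨rfl, rfl, h⟩ := h
  obtain ⟨rfl, rfl⟩ :=
    Prod.mk.inj (position_injective (c k) j (a₁ := (e, i)) (a₂ := (e', i')) h)
  rfl

theorem abs_blockMatrix_eq_tableValue_comp (hb : 6 * (l : ℤ) ≤ b) (c : Fin l → Bool) :
    (fun x : (Fin 2 × Fin l) × Fin 2 × Fin 3 =>
      |blockMatrix l b (c x.1.2) x.1.2 x.1.1 x.2.1 x.2.2|) =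
      (fun x : Fin 3 × Fin l × Fin 4 => tableValue l b x.1 x.2.1 x.2.2) ∘ tableIndex l c :=
  funext fun _ => abs_blockMatrix l b hb ..

end TwoByThree

open TwoByThree in
theorem exists_B_two
    (l u : ℕ) (hul : u ≤ l) (b : ℤ) (hb : 10 * (l : ℤ) ≤ b) :
    ∃ B : Fin (2 * (l - u)) ⊕ Fin (2 * u) → Matrix (Fin 2) (Fin 3) ℤ,
      (∀ p : Fin (2 * (l - u)), ∀ i, ∑ j, B (Sum.inl p) i j = 0) ∧
      (∀ p : Fin (2 * u),
        ∑ j, B (Sum.inr p) 0 j = 2 ∧ ∑ j, B (Sum.inr p) 1 j = -2) ∧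
      (∀ p, ∑ i, B p i 0 = -4 ∧ ∑ i, B p i 1 = 2 ∧ ∑ i, B p i 2 = 2) ∧
      Function.Injective
        (fun q : (Fin (2 * (l - u)) ⊕ Fin (2 * u)) × Fin 2 × Fin 3 => |B q.1 q.2.1 q.2.2|) ∧
      {x : ℤ | ∃ p i j, |B p i j| = x} =
        iSet 1 (b - 6 * (l : ℤ) + 1) (b + 2 * (l : ℤ)) ∪
        iSet 2 (2 * b - 8 * (l : ℤ) + 2) (2 * b) := by
  let σ := blockEquiv hul
  let c : Fin l → Bool := fun k => l - u ≤ k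
  have habs := abs_blockMatrix_eq_tableValue_comp l b (by omega) c
  refine ⟨fun p => blockMatrix l b (c (σ p).2) (σ p).2 (σ p).1, fun p i => ?_, fun p => ?_,
    fun p => ?_, ?_, ?_⟩
  · simp only [c, σ, not_le.2 (blockEquiv_inl_snd_lt hul p), decide_false]
    exact sum_blockMatrix_false_row ..
  · simp only [c, σ, le_blockEquiv_inr_snd hul p, decide_true]
    exact ⟨sum_blockMatrix_true_row_zero .., sum_blockMatrix_true_row_one ..⟩
  · exact ⟨sum_blockMatrix_col .., sum_blockMatrix_col .., sum_blockMatrix_col ..⟩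
  · have := ((tableValue_injective l b hb).comp (tableIndex_bijective l c).injective).comp
      (Equiv.prodCongr σ (Equiv.refl _)).injective
    rwa [← habs] at this
  · rw [← range_tableValue, ← (tableIndex_bijective l c).surjective.range_comp, ← habs,
      ← (Equiv.prodCongr σ (Equiv.refl _)).surjective.range_comp]
    ext x
    simp
end

section
/- Given an integer u ≥ 0, there exists a family 𝔅 of 2 × 3 integer matrices that is the disjoint union of two subfamilies 𝔅ᴵ and 𝔅ᴵᴵ such that: |𝔅ᴵ| = 14u + 12 and |𝔅ᴵᴵ| = 2u; every matrix in 𝔅ᴵ has row sums (0, 0) and column sums (−2, 1, 1); every matrix in 𝔅ᴵᴵ has row sums (−1, 1) and column sums (−2, 1, 1); and the absolute values of all entries of 𝔅 are pairwise distinct with set exactly [24u+36, 32u+34]₂ ∪ [32u+37, 36u+47]₂ ∪ [40u+49, 44u+59]₂ ∪ [48u+61, 96u+83]₂ ∪ [96u+84, 128u+107] ∪ [152u+144, 158u+149] ∪ [162u+150, 164u+155] ∪ [168u+156, 192u+167]. -/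
/-!
Every matrix of the family is determined by two integers `2 ≤ x < y`: those of type I are
`[[-x, y, x - y], [x - 2, 1 - y, y - x + 1]]` and those of type II are
`[[x - 2, 1 - y, y - x], [-x, y, x - y + 1]]`, which have the required row and column sums.
The absolute values in the three columns are `{x - 2, x}`, `{y - 1, y}` and `{y - x, y - x ± 1}`.
The matrices are arranged in four runs along which `x` grows by `4` and `y` by `2`, so that the
first column sweeps out the four progressions of step `2` below `96u + 84`, the third column
(where `y - x` drops by `2`) the interval `[96u + 84, 128u + 107]`, and the second column the three
intervals above `152u + 144`. These ranges are disjoint, and inside each of them a value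
determines the matrix and the row it sits in.
-/

section Shapes

variable {R : Type*} [CommRing R] (x y : R)

def shapeI : Matrix (Fin 2) (Fin 3) R :=
  !![-x, y, x - y; x - 2, 1 - y, y - x + 1]

def shapeII : Matrix (Fin 2) (Fin 3) R :=
  !![x - 2, 1 - y, y - x; -x, y, x - y + 1]

theorem shapeI_row_sum (i : Fin 2) : ∑ j, shapeI x y i j = 0 := by
  fin_cases i <;> simp [shapeI, Fin.sum_univ_three]
  ring

theorem shapeII_row_sums : ∑ j, shapeII x y 0 j = -1 ∧ ∑ j, shapeII x y 1 j = 1 := by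
  simp [shapeII, Fin.sum_univ_three]
  constructor <;> ring

theorem shapeI_col_sums :
    ∑ i, shapeI x y i 0 = -2 ∧ ∑ i, shapeI x y i 1 = 1 ∧ ∑ i, shapeI x y i 2 = 1 := by
  simp [shapeI, Fin.sum_univ_two]
  constructor <;> ring

theorem shapeII_col_sums :
    ∑ i, shapeII x y i 0 = -2 ∧ ∑ i, shapeII x y i 1 = 1 ∧ ∑ i, shapeII x y i 2 = 1 := by
  simp [shapeII, Fin.sum_univ_two]
  constructor <;> ring

variable [LinearOrder R] [IsStrictOrderedRing R] {x y}

theorem map_abs_shapeI (hx : 2 ≤ x) (hxy : x ≤ y) :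
    (shapeI x y).map abs = !![x, y, y - x; x - 2, y - 1, y - x + 1] := by
  ext i j
  fin_cases i <;> fin_cases j <;> simp [shapeI]
  all_goals first
    | linarith
    | (rw [abs_of_nonpos (by linarith)]; ring)

theorem map_abs_shapeII (hx : 2 ≤ x) (hxy : x + 1 ≤ y) :
    (shapeII x y).map abs = !![x - 2, y - 1, y - x; x, y, y - x - 1] := by
  ext i j
  fin_cases i <;> fin_cases j <;> simp [shapeII]
  all_goals first
    | linarith
    | (rw [abs_of_nonpos (by linarith)]; ring)

end Shapes

namespace FamilyB

def x (u m : ℕ) : ℤ :=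
  if m < 12 * u + 6 then 48 * u + 63 + 4 * m
  else if m < 13 * u + 9 then 40 * u + 51 + 4 * ↑(m - (12 * u + 6))
  else if m < 14 * u + 12 then 32 * u + 39 + 4 * ↑(m - (13 * u + 9))
  else 24 * u + 38 + 4 * ↑(m - (14 * u + 12))

def y (u m : ℕ) : ℤ :=
  if m < 12 * u + 6 then 168 * u + 157 + 2 * m
  else if m < 13 * u + 9 then 162 * u + 151 + 2 * ↑(m - (12 * u + 6))
  else if m < 14 * u + 12 then 156 * u + 145 + 2 * ↑(m - (13 * u + 9))
  else 152 * u + 145 + 2 * ↑(m - (14 * u + 12))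

def mat (u m : ℕ) : Matrix (Fin 2) (Fin 3) ℤ :=
  if m < 14 * u + 12 then shapeI (x u m) (y u m) else shapeII (x u m) (y u m)

def family (u : ℕ) (p : Fin (14 * u + 12) ⊕ Fin (2 * u)) : Matrix (Fin 2) (Fin 3) ℤ :=
  mat u (finSumFinEquiv p)

def absMat (u m : ℕ) : Matrix (Fin 2) (Fin 3) ℤ :=
  if m < 14 * u + 12 then !![x u m, y u m, y u m - x u m; x u m - 2, y u m - 1, y u m - x u m + 1]
  else !![x u m - 2, y u m - 1, y u m - x u m; x u m, y u m, y u m - x u m - 1]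

def colSupport (u : ℕ) : Fin 3 → Set ℤ :=
  ![iSet 2 (24 * u + 36) (32 * u + 34) ∪ iSet 2 (32 * u + 37) (36 * u + 47) ∪
      iSet 2 (40 * u + 49) (44 * u + 59) ∪ iSet 2 (48 * u + 61) (96 * u + 83),
    iSet 1 (152 * u + 144) (158 * u + 149) ∪ iSet 1 (162 * u + 150) (164 * u + 155) ∪
      iSet 1 (168 * u + 156) (192 * u + 167),
    iSet 1 (96 * u + 84) (128 * u + 107)]

/-- The position of the matrix whose column `j` contains the value `v`, read off from the run
that covers `v`. -/
def index (u : ℕ) : Fin 3 → ℤ → ℕ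
  | 0, v =>
    if v ≤ 32 * u + 34 then 14 * u + 12 + ((v - (24 * u + 36)) / 4).toNat
    else if v ≤ 36 * u + 47 then 13 * u + 9 + ((v - (32 * u + 37)) / 4).toNat
    else if v ≤ 44 * u + 59 then 12 * u + 6 + ((v - (40 * u + 49)) / 4).toNat
    else ((v - (48 * u + 61)) / 4).toNat
  | 1, v =>
    if v ≤ 156 * u + 143 then 14 * u + 12 + ((v - (152 * u + 144)) / 2).toNat
    else if v ≤ 158 * u + 149 then 13 * u + 9 + ((v - (156 * u + 144)) / 2).toNat
    else if v ≤ 164 * u + 155 then 12 * u + 6 + ((v - (162 * u + 150)) / 2).toNat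
    else ((v - (168 * u + 156)) / 2).toNat
  | 2, v =>
    if v ≤ 120 * u + 95 then ((120 * u + 95 - v) / 2).toNat
    else if v ≤ 122 * u + 101 then 12 * u + 6 + ((122 * u + 101 - v) / 2).toNat
    else if v ≤ 124 * u + 107 then 13 * u + 9 + ((124 * u + 107 - v) / 2).toNat
    else 14 * u + 12 + ((128 * u + 107 - v) / 2).toNat

variable {u m : ℕ}

theorem x_y_cases (hm : m < 16 * u + 12) :
    (m < 12 * u + 6 ∧ x u m = 48 * u + 63 + 4 * m ∧ y u m = 168 * u + 157 + 2 * m) ∨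
    (12 * u + 6 ≤ m ∧ m < 13 * u + 9 ∧
      x u m = 40 * u + 51 + 4 * ↑(m - (12 * u + 6)) ∧
      y u m = 162 * u + 151 + 2 * ↑(m - (12 * u + 6))) ∨
    (13 * u + 9 ≤ m ∧ m < 14 * u + 12 ∧
      x u m = 32 * u + 39 + 4 * ↑(m - (13 * u + 9)) ∧
      y u m = 156 * u + 145 + 2 * ↑(m - (13 * u + 9))) ∨
    (14 * u + 12 ≤ m ∧
      x u m = 24 * u + 38 + 4 * ↑(m - (14 * u + 12)) ∧
      y u m = 152 * u + 145 + 2 * ↑(m - (14 * u + 12))) := by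
  unfold x y; split_ifs <;> omega

theorem mat_of_lt (hm : m < 14 * u + 12) : mat u m = shapeI (x u m) (y u m) := if_pos hm

theorem mat_of_le (hm : 14 * u + 12 ≤ m) : mat u m = shapeII (x u m) (y u m) :=
  if_neg hm.not_gt

theorem family_inl (p : Fin (14 * u + 12)) :
    family u (Sum.inl p) = shapeI (x u p) (y u p) := by
  rw [family, finSumFinEquiv_apply_left, Fin.val_castAdd, mat_of_lt p.isLt]

theorem family_inr (p : Fin (2 * u)) :
    family u (Sum.inr p) = shapeII (x u (14 * u + 12 + p)) (y u (14 * u + 12 + p)) := by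
  rw [family, finSumFinEquiv_apply_right, Fin.val_natAdd, mat_of_le (Nat.le_add_right _ _)]

theorem family_col_sums (p : Fin (14 * u + 12) ⊕ Fin (2 * u)) :
    ∑ i, family u p i 0 = -2 ∧ ∑ i, family u p i 1 = 1 ∧ ∑ i, family u p i 2 = 1 := by
  rw [family, mat]; split_ifs
  exacts [shapeI_col_sums _ _, shapeII_col_sums _ _]

theorem val_finSumFinEquiv_lt (p : Fin (14 * u + 12) ⊕ Fin (2 * u)) :
    (finSumFinEquiv p : ℕ) < 16 * u + 12 := by
  have := (finSumFinEquiv p).isLt; omega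

theorem abs_mat_apply (hm : m < 16 * u + 12) (i : Fin 2) (j : Fin 3) :
    |mat u m i j| = absMat u m i j := by
  have := x_y_cases hm
  suffices (mat u m).map abs = absMat u m by rw [← this]; rfl
  unfold absMat
  split_ifs with h
  · rw [mat_of_lt h, map_abs_shapeI (by omega) (by omega)]
  · rw [mat_of_le (not_lt.mp h), map_abs_shapeII (by omega) (by omega)]

theorem absMat_mem_colSupport (i : Fin 2) (j : Fin 3) (hm : m < 16 * u + 12) :
    absMat u m i j ∈ colSupport u j := by
  have := x_y_cases hm
  unfold absMat
  split_ifs <;> fin_cases i <;> fin_cases j <;>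
    simp only [colSupport, iSet, Set.mem_union, Set.mem_ofPred_eq, Fin.reduceFinMk,
      Matrix.cons_val, Matrix.of_apply] <;>
    omega

theorem index_lt {v : ℤ} {j : Fin 3} (hv : v ∈ colSupport u j) :
    index u j v < 16 * u + 12 := by
  fin_cases j <;>
    simp only [colSupport, iSet, Set.mem_union, Set.mem_ofPred_eq, Fin.reduceFinMk,
      Matrix.cons_val] at hv <;>
    simp only [index] <;> split_ifs <;> omega

theorem absMat_index {v : ℤ} {j : Fin 3} (hv : v ∈ colSupport u j) :
    ∃ i, absMat u (index u j v) i j = v := by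
  have := x_y_cases (index_lt hv)
  unfold absMat
  generalize x u (index u j v) = X at *
  generalize y u (index u j v) = Y at *
  split_ifs <;> fin_cases j <;>
    simp only [colSupport, iSet, Set.mem_union, Set.mem_ofPred_eq, Fin.exists_fin_two,
      Fin.reduceFinMk, Matrix.cons_val, Matrix.of_apply] at hv ⊢ <;>
    simp only [index] at * <;> split_ifs at * <;> omega

theorem colSupport_disjoint {j j' : Fin 3} (h : j ≠ j') :
    Disjoint (colSupport u j) (colSupport u j') := by
  fin_cases j <;> fin_cases j' <;> simp_all [Set.disjoint_left, colSupport, iSet] <;> omega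

theorem absMat_inj_of_col {m₁ m₂ : ℕ} (hm₁ : m₁ < 16 * u + 12) (hm₂ : m₂ < 16 * u + 12)
    {i₁ i₂ : Fin 2} {j : Fin 3} (h : absMat u m₁ i₁ j = absMat u m₂ i₂ j) :
    m₁ = m₂ ∧ i₁ = i₂ := by
  have := x_y_cases hm₁
  have := x_y_cases hm₂
  unfold absMat at h
  split_ifs at h <;> fin_cases j <;> fin_cases i₁ <;> fin_cases i₂ <;>
    simp only [Fin.reduceFinMk, Fin.isValue, Fin.reduceEq, Matrix.cons_val, Matrix.of_apply,
      and_true, and_false] at h ⊢ <;>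
    omega

theorem absMat_inj {m₁ m₂ : ℕ} (hm₁ : m₁ < 16 * u + 12) (hm₂ : m₂ < 16 * u + 12)
    {i₁ i₂ : Fin 2} {j₁ j₂ : Fin 3} (h : absMat u m₁ i₁ j₁ = absMat u m₂ i₂ j₂) :
    m₁ = m₂ ∧ i₁ = i₂ ∧ j₁ = j₂ := by
  obtain rfl : j₁ = j₂ := by
    by_contra hj
    refine Set.disjoint_left.mp (colSupport_disjoint hj) (absMat_mem_colSupport i₁ j₁ hm₁) ?_
    exact h ▸ absMat_mem_colSupport i₂ j₂ hm₂
  exact ⟨(absMat_inj_of_col hm₁ hm₂ h).1, (absMat_inj_of_col hm₁ hm₂ h).2, rfl⟩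

theorem abs_family_injective (u : ℕ) :
    Function.Injective
      (fun q : (Fin (14 * u + 12) ⊕ Fin (2 * u)) × Fin 2 × Fin 3 => |family u q.1 q.2.1 q.2.2|) := by
  rintro ⟨p₁, i₁, j₁⟩ ⟨p₂, i₂, j₂⟩ h
  simp only [family, abs_mat_apply (val_finSumFinEquiv_lt _)] at h
  obtain ⟨hm, rfl, rfl⟩ :=
    absMat_inj (val_finSumFinEquiv_lt p₁) (val_finSumFinEquiv_lt p₂) h
  rw [finSumFinEquiv.injective (Fin.ext hm)]

theorem support_family (u : ℕ) :
    {v | ∃ p i j, |family u p i j| = v} = ⋃ j, colSupport u j := by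
  ext v
  simp only [Set.mem_ofPred_eq, Set.mem_iUnion]
  constructor
  · rintro ⟨p, i, j, rfl⟩
    rw [family, abs_mat_apply (val_finSumFinEquiv_lt p)]
    exact ⟨j, absMat_mem_colSupport i j (val_finSumFinEquiv_lt p)⟩
  · rintro ⟨j, hv⟩
    obtain ⟨i, hi⟩ := absMat_index hv
    refine ⟨finSumFinEquiv.symm ⟨index u j v, by have := index_lt hv; omega⟩, i, j, ?_⟩
    rw [family, Equiv.apply_symm_apply, abs_mat_apply (index_lt hv), hi]

theorem iUnion_colSupport (u : ℕ) :
    ⋃ j, colSupport u j = colSupport u 0 ∪ colSupport u 2 ∪ colSupport u 1 := by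
  ext v
  simp only [Set.mem_iUnion, Set.mem_union, Fin.exists_fin_succ, Fin.exists_fin_zero]
  tauto

end FamilyB

theorem exists_B_three
    (u : ℕ) :
    ∃ B : Fin (14 * u + 12) ⊕ Fin (2 * u) → Matrix (Fin 2) (Fin 3) ℤ,
      (∀ p : Fin (14 * u + 12), ∀ i, ∑ j, B (Sum.inl p) i j = 0) ∧
      (∀ p : Fin (2 * u),
        ∑ j, B (Sum.inr p) 0 j = -1 ∧ ∑ j, B (Sum.inr p) 1 j = 1) ∧
      (∀ p, ∑ i, B p i 0 = -2 ∧ ∑ i, B p i 1 = 1 ∧ ∑ i, B p i 2 = 1) ∧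
      Function.Injective
        (fun q : (Fin (14 * u + 12) ⊕ Fin (2 * u)) × Fin 2 × Fin 3 => |B q.1 q.2.1 q.2.2|) ∧
      {x : ℤ | ∃ p i j, |B p i j| = x} =
        iSet 2 (24 * (u : ℤ) + 36) (32 * (u : ℤ) + 34) ∪
        iSet 2 (32 * (u : ℤ) + 37) (36 * (u : ℤ) + 47) ∪
        iSet 2 (40 * (u : ℤ) + 49) (44 * (u : ℤ) + 59) ∪
        iSet 2 (48 * (u : ℤ) + 61) (96 * (u : ℤ) + 83) ∪
        iSet 1 (96 * (u : ℤ) + 84) (128 * (u : ℤ) + 107) ∪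
        iSet 1 (152 * (u : ℤ) + 144) (158 * (u : ℤ) + 149) ∪
        iSet 1 (162 * (u : ℤ) + 150) (164 * (u : ℤ) + 155) ∪
        iSet 1 (168 * (u : ℤ) + 156) (192 * (u : ℤ) + 167) := by
  refine ⟨FamilyB.family u, fun p i => ?_, fun p => ?_, FamilyB.family_col_sums,
    FamilyB.abs_family_injective u, ?_⟩
  · rw [FamilyB.family_inl]; exact shapeI_row_sum _ _ i
  · rw [FamilyB.family_inr]; exact shapeII_row_sums _ _
  · rw [FamilyB.support_family, FamilyB.iUnion_colSupport]
    simp only [FamilyB.colSupport, Matrix.cons_val, Set.union_assoc]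
end

section
/- Let α, β be nonnegative integers and let 𝒢 be a set of positive integers with |𝒢| = 16α + 24β. Suppose 𝒢 can be partitioned into an even number of 4-sets of type 1 together with an even number of 4-sets of type 2. Then there exist α integer matrices C₁, …, C_α of size 4 × 4 and β integer matrices D₁, …, D_β of size 6 × 4 such that: (1) every row sum and every column sum of each C_h and each D_k equals 0; and (2) the absolute values of all entries of the C_h's and D_k's are pairwise distinct and their set is exactly 𝒢. -/
/-- `fourSet d x` is the 4-set of type `d`: `{x, x + d, x + 2d, x + 3d}`. -/
def fourSet (d x : ℤ) : Finset ℤ := {x, x + d, x + 2 * d, x + 3 * d}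

/-!
Since there is an even number of 4-sets of each type, they can be grouped into pairs of 4-sets
of the same type `t`. The eight numbers of such a pair, suitably signed, fill a `2 × 4` block
with zero row sums and column sums `c • (1, -1, 1, -1)`, for any prescribed `c ∈ {±t, ±2t}`.
Stacking two blocks with `c = 2, -2` gives a `4 × 4` matrix with zero line sums; stacking three
blocks with `c = s, s, -2s`, the `-2s` on a pair of largest type `s`, gives a `6 × 4` one.
As `|𝒢| = 8 (2α + 3β)`, there are exactly enough pairs, and since every element of `𝒢` occurs
as an absolute entry, counting shows that no value occurs twice.
-/

open Finset

theorem injective_of_range_eq_of_card_eq {ι α : Type*} [Fintype ι] [DecidableEq α] {f : ι → α}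
    {s : Finset α} (hf : Set.range f = s) (hcard : s.card = Fintype.card ι) :
    Function.Injective f := by
  have himage : univ.image f = s := coe_injective (by simpa using hf)
  rw [← Set.injOn_univ, ← coe_univ, ← card_image_iff, himage, hcard, card_univ]

section Blocks

variable {ι κ m m' n R : Type*}

def stackBlocks (B : ι → Matrix κ n R) : Matrix (ι × κ) n R :=
  Matrix.of fun p j => B p.1 p.2 j

def absRange [Lattice R] [AddGroup R] (M : Matrix m n R) : Set R :=
  Set.range fun p : m × n => |M p.1 p.2|

@[simp] theorem absRange_neg [Lattice R] [AddGroup R] (M : Matrix m n R) :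
    absRange (-M) = absRange M := by
  simp [absRange]

theorem absRange_submatrix [Lattice R] [AddGroup R] (M : Matrix m n R) (e : m' ≃ m) :
    absRange (M.submatrix e id) = absRange M :=
  (e.prodCongr (Equiv.refl n)).surjective.range_comp fun p : m × n => |M p.1 p.2|

theorem absRange_stackBlocks [Lattice R] [AddGroup R] (B : ι → Matrix κ n R) :
    absRange (stackBlocks B) = ⋃ i, absRange (B i) := by
  ext x; simp [absRange, stackBlocks]

variable [Fintype ι] [Fintype κ] [Fintype m] [Fintype m'] [Fintype n]

def HasLineSums [AddCommMonoid R] (M : Matrix m n R) (v : n → R) : Prop :=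
  (∀ i, ∑ j, M i j = 0) ∧ ∀ j, ∑ i, M i j = v j

theorem HasLineSums.neg [AddCommGroup R] {M : Matrix m n R} {v : n → R} (h : HasLineSums M v) :
    HasLineSums (-M) (-v) :=
  ⟨fun i => by simp [sum_neg_distrib, h.1 i], fun j => by simp [sum_neg_distrib, h.2 j]⟩

theorem HasLineSums.submatrix [AddCommMonoid R] {M : Matrix m n R} {v : n → R}
    (h : HasLineSums M v) (e : m' ≃ m) : HasLineSums (M.submatrix e id) v :=
  ⟨fun i => h.1 (e i), fun j => (e.sum_comp fun i => M i j).trans (h.2 j)⟩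

theorem HasLineSums.stackBlocks [AddCommMonoid R] {B : ι → Matrix κ n R} {w : ι → n → R}
    (h : ∀ i, HasLineSums (B i) (w i)) : HasLineSums (stackBlocks B) (∑ i, w i) :=
  ⟨fun p => (h p.1).1 p.2, fun j => by
    simp [_root_.stackBlocks, Fintype.sum_prod_type, (h _).2 j, Finset.sum_apply]⟩

end Blocks

def pairSet (t a b : ℤ) : Finset ℤ := fourSet t a ∪ fourSet t b

def altSign : Fin 4 → ℤ := ![1, -1, 1, -1]

def pairBlock₁ (t a b : ℤ) : Matrix (Fin 2) (Fin 4) ℤ :=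
  !![a + t, -(a + 3 * t), -b, b + 2 * t; -a, a + 2 * t, b + t, -(b + 3 * t)]

def pairBlock₂ (t a b : ℤ) : Matrix (Fin 2) (Fin 4) ℤ :=
  !![a, -b, b + t, -(a + t); -(a + 2 * t), b + 2 * t, -(b + 3 * t), a + 3 * t]

theorem hasLineSums_pairBlock₁ (t a b : ℤ) : HasLineSums (pairBlock₁ t a b) (t • altSign) := by
  refine ⟨fun i => ?_, fun j => ?_⟩
  · fin_cases i <;> simp [pairBlock₁, Fin.sum_univ_four] <;> ring
  · fin_cases j <;> simp [pairBlock₁, altSign] <;> ring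

theorem hasLineSums_pairBlock₂ (t a b : ℤ) :
    HasLineSums (pairBlock₂ t a b) ((-2 * t) • altSign) := by
  refine ⟨fun i => ?_, fun j => ?_⟩
  · fin_cases i <;> simp [pairBlock₂, Fin.sum_univ_four]
    ring
  · fin_cases j <;> simp [pairBlock₂, altSign] <;> ring

theorem absRange_pairBlock₁ {t a b : ℤ} (hpos : ∀ x ∈ pairSet t a b, 0 < x) :
    absRange (pairBlock₁ t a b) = pairSet t a b := by
  simp only [pairSet, fourSet, mem_union, mem_insert, mem_singleton, or_imp, forall_and,
    forall_eq] at hpos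
  ext x
  simp [absRange, pairBlock₁, pairSet, fourSet, Fin.exists_fin_succ, abs_eq_max_neg]
  omega

theorem absRange_pairBlock₂ {t a b : ℤ} (hpos : ∀ x ∈ pairSet t a b, 0 < x) :
    absRange (pairBlock₂ t a b) = pairSet t a b := by
  simp only [pairSet, fourSet, mem_union, mem_insert, mem_singleton, or_imp, forall_and,
    forall_eq] at hpos
  ext x
  simp [absRange, pairBlock₂, pairSet, fourSet, Fin.exists_fin_succ, abs_eq_max_neg]
  omega

theorem exists_pairBlock {c t a b : ℤ} (hc : c = t ∨ c = -t ∨ c = 2 * t ∨ c = -2 * t)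
    (hpos : ∀ x ∈ pairSet t a b, 0 < x) :
    ∃ B : Matrix (Fin 2) (Fin 4) ℤ, HasLineSums B (c • altSign) ∧ absRange B = pairSet t a b := by
  obtain hc | hc | hc | hc := hc <;> subst c
  · exact ⟨_, hasLineSums_pairBlock₁ t a b, absRange_pairBlock₁ hpos⟩
  · exact ⟨_, by simpa using (hasLineSums_pairBlock₁ t a b).neg,
      (absRange_neg _).trans (absRange_pairBlock₁ hpos)⟩
  · exact ⟨_, by simpa using (hasLineSums_pairBlock₂ t a b).neg,
      (absRange_neg _).trans (absRange_pairBlock₂ hpos)⟩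
  · exact ⟨_, hasLineSums_pairBlock₂ t a b, absRange_pairBlock₂ hpos⟩

theorem exists_hasLineSums_zero_of_pairs {k : ℕ} (t a b c : Fin k → ℤ)
    (hc : ∀ i, c i = t i ∨ c i = -t i ∨ c i = 2 * t i ∨ c i = -2 * t i) (hsum : ∑ i, c i = 0)
    (hpos : ∀ i, ∀ x ∈ pairSet (t i) (a i) (b i), 0 < x) :
    ∃ M : Matrix (Fin (k * 2)) (Fin 4) ℤ,
      HasLineSums M 0 ∧ absRange M = ⋃ i, ↑(pairSet (t i) (a i) (b i)) := by
  choose B hB hBrange using fun i => exists_pairBlock (hc i) (hpos i)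
  refine ⟨(stackBlocks B).submatrix finProdFinEquiv.symm id, ?_, ?_⟩
  · have := (HasLineSums.stackBlocks hB).submatrix finProdFinEquiv.symm
    rwa [← Finset.sum_smul, hsum, zero_smul] at this
  · rw [absRange_submatrix, absRange_stackBlocks]
    simp only [hBrange]

theorem exists_coeffs_fin_two (t : Fin 2 → ℤ) (ht : ∀ i, t i = 1 ∨ t i = 2) :
    ∃ c : Fin 2 → ℤ, (∀ i, c i = t i ∨ c i = -t i ∨ c i = 2 * t i ∨ c i = -2 * t i) ∧
      ∑ i, c i = 0 := by
  refine ⟨![2, -2], fun i => ?_, by simp⟩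
  have := ht i
  fin_cases i <;> simp at this ⊢ <;> omega

theorem exists_coeffs_fin_three (t : Fin 3 → ℤ) (ht : ∀ i, t i = 1 ∨ t i = 2) :
    ∃ c : Fin 3 → ℤ, (∀ i, c i = t i ∨ c i = -t i ∨ c i = 2 * t i ∨ c i = -2 * t i) ∧
      ∑ i, c i = 0 := by
  by_cases h : ∃ k, t k = 2
  · obtain ⟨k, hk⟩ := h
    refine ⟨fun i => if i = k then -4 else 2, fun i => ?_, ?_⟩
    · by_cases hi : i = k
      · subst hi; simp; omega
      · have := ht i; simp [hi]; omega
    · fin_cases k <;> simp [Fin.sum_univ_three]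
  · push Not at h
    refine ⟨![1, 1, -2], fun i => ?_, by simp [Fin.sum_univ_three]⟩
    have := ht i
    have := h i
    fin_cases i <;> simp at * <;> omega

theorem exists_blocks_of_pairs {α β : ℕ} (t a b : (Fin α × Fin 2) ⊕ (Fin β × Fin 3) → ℤ)
    (ht : ∀ p, t p = 1 ∨ t p = 2) (hpos : ∀ p, ∀ x ∈ pairSet (t p) (a p) (b p), 0 < x) :
    ∃ (C : Fin α → Matrix (Fin 4) (Fin 4) ℤ) (D : Fin β → Matrix (Fin 6) (Fin 4) ℤ),
      (∀ h, HasLineSums (C h) 0) ∧ (∀ k, HasLineSums (D k) 0) ∧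
      (⋃ h, absRange (C h)) ∪ (⋃ k, absRange (D k)) = ⋃ p, ↑(pairSet (t p) (a p) (b p)) := by
  have hC (h : Fin α) : ∃ M : Matrix (Fin 4) (Fin 4) ℤ, HasLineSums M 0 ∧
      absRange M = ⋃ i, ↑(pairSet (t (.inl (h, i))) (a (.inl (h, i))) (b (.inl (h, i)))) := by
    obtain ⟨c, hc, hsum⟩ := exists_coeffs_fin_two _ fun i => ht (.inl (h, i))
    exact exists_hasLineSums_zero_of_pairs _ _ _ c hc hsum fun i => hpos _
  have hD (k : Fin β) : ∃ M : Matrix (Fin 6) (Fin 4) ℤ, HasLineSums M 0 ∧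
      absRange M = ⋃ i, ↑(pairSet (t (.inr (k, i))) (a (.inr (k, i))) (b (.inr (k, i)))) := by
    obtain ⟨c, hc, hsum⟩ := exists_coeffs_fin_three _ fun i => ht (.inr (k, i))
    exact exists_hasLineSums_zero_of_pairs _ _ _ c hc hsum fun i => hpos _
  choose C hC hCrange using hC
  choose D hD hDrange using hD
  refine ⟨C, D, hC, hD, ?_⟩
  rw [Set.iUnion_sum, Set.iUnion_prod', Set.iUnion_prod']
  simp only [hCrange, hDrange]

theorem card_fourSet {d : ℤ} (hd : d ≠ 0) (x : ℤ) : (fourSet d x).card = 4 := by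
  rw [fourSet, card_insert_of_notMem, card_insert_of_notMem, card_pair] <;> simp <;> omega

theorem iUnion_pairSet_halves {n : ℕ} (d : ℤ) (f : Fin (n + n) → ℤ) :
    ⋃ i, (pairSet d (f (Fin.castAdd n i)) (f (Fin.natAdd n i)) : Set ℤ) =
      ⋃ q, (fourSet d (f q) : Set ℤ) := by
  rw [← finSumFinEquiv.surjective.iUnion_comp, Set.iUnion_sum, ← Set.iUnion_union_distrib]
  simp [pairSet]

theorem exists_pairs_of_partition {γ δ : ℕ} (f : Fin (γ + γ) → ℤ) (g : Fin (δ + δ) → ℤ) :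
    ∃ t a b : Fin γ ⊕ Fin δ → ℤ, (∀ p, t p = 1 ∨ t p = 2) ∧
      ⋃ p, (pairSet (t p) (a p) (b p) : Set ℤ) =
        ↑(univ.biUnion (Sum.elim (fun i => fourSet 1 (f i)) (fun i => fourSet 2 (g i)))) := by
  refine ⟨Sum.elim (fun _ => 1) (fun _ => 2), Sum.elim (f ∘ Fin.castAdd γ) (g ∘ Fin.castAdd δ),
    Sum.elim (f ∘ Fin.natAdd γ) (g ∘ Fin.natAdd δ), by simp, ?_⟩
  rw [coe_biUnion, coe_univ, Set.biUnion_univ, Set.iUnion_sum, Set.iUnion_sum]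
  simp only [Sum.elim_inl, Sum.elim_inr, Function.comp_apply, iUnion_pairSet_halves]

theorem card_biUnion_fourSet {γ δ : ℕ} (f : Fin γ → ℤ) (g : Fin δ → ℤ)
    (hdisj : ∀ p q : Fin γ ⊕ Fin δ, p ≠ q →
      Disjoint (Sum.elim (fun i => fourSet 1 (f i)) (fun i => fourSet 2 (g i)) p)
        (Sum.elim (fun i => fourSet 1 (f i)) (fun i => fourSet 2 (g i)) q)) :
    (univ.biUnion (Sum.elim (fun i => fourSet 1 (f i)) (fun i => fourSet 2 (g i)))).card =
      4 * (γ + δ) := by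
  rw [card_biUnion fun p _ q _ => hdisj p q, Fintype.sum_sum_type]
  simp [card_fourSet]
  ring

theorem exists_blocks
    (α β : ℕ) (G : Finset ℤ) (hpos : ∀ x ∈ G, 0 < x)
    (hcard : G.card = 16 * α + 24 * β)
    (hpart : ∃ (γ δ : ℕ) (f : Fin γ → ℤ) (g : Fin δ → ℤ),
      Even γ ∧ Even δ ∧
      (∀ p q : Fin γ ⊕ Fin δ, p ≠ q →
        Disjoint (Sum.elim (fun i => fourSet 1 (f i)) (fun i => fourSet 2 (g i)) p)
                 (Sum.elim (fun i => fourSet 1 (f i)) (fun i => fourSet 2 (g i)) q)) ∧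
      G = Finset.univ.biUnion
        (Sum.elim (fun i => fourSet 1 (f i)) (fun i => fourSet 2 (g i)))) :
    ∃ (C : Fin α → Matrix (Fin 4) (Fin 4) ℤ) (D : Fin β → Matrix (Fin 6) (Fin 4) ℤ),
      (∀ h i, ∑ j, C h i j = 0) ∧ (∀ h j, ∑ i, C h i j = 0) ∧
      (∀ k i, ∑ j, D k i j = 0) ∧ (∀ k j, ∑ i, D k i j = 0) ∧
      Function.Injective
        (fun q : (Fin α × Fin 4 × Fin 4) ⊕ (Fin β × Fin 6 × Fin 4) =>
          Sum.elim (fun p => |C p.1 p.2.1 p.2.2|) (fun p => |D p.1 p.2.1 p.2.2|) q) ∧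
      {x : ℤ | (∃ h i j, |C h i j| = x) ∨ (∃ k i j, |D k i j| = x)} = (G : Set ℤ) := by
  obtain ⟨_, _, f, g, ⟨γ, rfl⟩, ⟨δ, rfl⟩, hdisj, hG⟩ := hpart
  obtain ⟨t, a, b, ht, hunion⟩ := exists_pairs_of_partition f g
  rw [← hG] at hunion
  obtain ⟨e⟩ : Nonempty ((Fin α × Fin 2) ⊕ (Fin β × Fin 3) ≃ Fin γ ⊕ Fin δ) := by
    have := hG ▸ card_biUnion_fourSet f g hdisj
    exact Fintype.card_eq.mp (by simp; omega)
  have hpairPos (p) : ∀ x ∈ pairSet (t (e p)) (a (e p)) (b (e p)), 0 < x := fun x hx =>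
    hpos x (by rw [← mem_coe, ← hunion]; exact Set.mem_iUnion_of_mem _ hx)
  obtain ⟨C, D, hC, hD, hrange⟩ := exists_blocks_of_pairs _ _ _ (fun p => ht (e p)) hpairPos
  have hentries : {x : ℤ | (∃ h i j, |C h i j| = x) ∨ (∃ k i j, |D k i j| = x)} = G := by
    rw [← hunion, ← e.surjective.iUnion_comp, ← hrange]
    ext x; simp [absRange]
  refine ⟨C, D, fun h => (hC h).1, fun h => (hC h).2, fun k => (hD k).1, fun k => (hD k).2,
    injective_of_range_eq_of_card_eq (by rw [← hentries]; ext; simp) ?_, hentries⟩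
  simp [hcard]
  ring
end

section
/- Let b, ℓ, x be positive integers with b and ℓ odd and x > b + 2ℓ. Then there exists a family of (ℓ+1)/2 integer matrices of size 2 × 3 such that every matrix in the family has row sums (0, 0) and column sums (−2, 1, 1), and the absolute values of all entries of the family are pairwise distinct with set exactly [b, b+2ℓ]₂ ∪ [x, x+ℓ] ∪ [x+b+ℓ, x+b+2ℓ]. -/
def colValue (b l x m : ℤ) : Fin 3 → ℤ := ![b + 2 * m, x + l - m, x + b + l + m]

def pairMatrix (b l x m : ℤ) : Matrix (Fin 2) (Fin 3) ℤ :=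
  !![colValue b l x m 0, colValue b l x m 1, -colValue b l x m 2;
    -colValue b l x (m + 1) 0, -colValue b l x (m + 1) 1, colValue b l x (m + 1) 2]

section PairMatrix

variable (b l x m : ℤ)

theorem pairMatrix_row_sum (i : Fin 2) : ∑ j, pairMatrix b l x m i j = 0 := by
  fin_cases i <;> simp [pairMatrix, colValue, Fin.sum_univ_three] <;> ring

theorem pairMatrix_col_sums :
    ∑ i, pairMatrix b l x m i 0 = -2 ∧ ∑ i, pairMatrix b l x m i 1 = 1 ∧
      ∑ i, pairMatrix b l x m i 2 = 1 := by
  refine ⟨?_, ?_, ?_⟩ <;> simp [pairMatrix, colValue, Fin.sum_univ_two] <;> ring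

theorem abs_pairMatrix (i : Fin 2) (j : Fin 3) :
    |pairMatrix b l x m i j| = |colValue b l x (m + (i : ℕ)) j| := by
  fin_cases i <;> fin_cases j <;> simp [pairMatrix]

end PairMatrix

section ColValue

variable {b l x : ℤ}

theorem colValue_nonneg (hb : 0 ≤ b) (hx : 0 ≤ x) {m : ℤ} (hm : m ∈ Set.Icc 0 l)
    (j : Fin 3) : 0 ≤ colValue b l x m j := by
  obtain ⟨hm₀, hml⟩ := hm
  fin_cases j <;> simp [colValue] <;> omega

theorem colValue_inj (hb : 0 < b) (hx : b + 2 * l < x) {m m' : ℤ} (hm : m ∈ Set.Icc 0 l)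
    (hm' : m' ∈ Set.Icc 0 l) {j j' : Fin 3} (h : colValue b l x m j = colValue b l x m' j') :
    j = j' ∧ m = m' := by
  obtain ⟨hm₀, hml⟩ := hm
  obtain ⟨hm₀', hml'⟩ := hm'
  fin_cases j <;> fin_cases j' <;> simp [colValue] at h ⊢ <;> omega

theorem setOf_colValue_eq :
    {y | ∃ j, ∃ m ∈ Set.Icc 0 l, colValue b l x m j = y} =
      iSet 2 b (b + 2 * l) ∪ iSet 1 x (x + l) ∪ iSet 1 (x + b + l) (x + b + 2 * l) := by
  ext y
  simp only [Set.mem_ofPred_eq, Set.mem_union, iSet, Fin.exists_fin_succ, Fin.exists_fin_zero,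
    Set.mem_Icc, one_dvd, and_true]
  constructor
  · rintro (⟨m, hm, rfl⟩ | ⟨m, hm, rfl⟩ | ⟨m, hm, rfl⟩ | ⟨⟨⟩⟩) <;> simp [colValue] <;> omega
  · rintro ((⟨hy₀, hyl, c, hc⟩ | ⟨hy₀, hyl⟩) | ⟨hy₀, hyl⟩)
    · exact .inl ⟨c, by omega, by simp [colValue]; omega⟩
    · exact .inr (.inl ⟨x + l - y, by omega, by simp [colValue]⟩)
    · exact .inr (.inr (.inl ⟨y - x - b - l, by omega, by simp [colValue]⟩))

end ColValue

theorem two_mul_add_mem_Icc {l : ℕ} (p : Fin ((l + 1) / 2)) (i : Fin 2) :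
    2 * ((p : ℕ) : ℤ) + (i : ℕ) ∈ Set.Icc 0 (l : ℤ) := by
  have := p.isLt
  have := i.isLt
  constructor <;> omega

theorem exists_two_mul_add_eq {l : ℕ} (hl : Odd l) {m : ℤ} (hm : m ∈ Set.Icc 0 (l : ℤ)) :
    ∃ (p : Fin ((l + 1) / 2)) (i : Fin 2), 2 * ((p : ℕ) : ℤ) + (i : ℕ) = m := by
  obtain ⟨k, rfl⟩ := hl
  obtain ⟨hm₀, hml⟩ := hm
  refine ⟨⟨(m / 2).toNat, by omega⟩, ⟨(m % 2).toNat, by omega⟩, by simp; omega⟩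

theorem exists_B_four_general
    (b l x : ℕ) (hb : 0 < b)
    (hlodd : Odd l) (hxgt : b + 2 * l < x) :
    ∃ B : Fin ((l + 1) / 2) → Matrix (Fin 2) (Fin 3) ℤ,
      (∀ p i, ∑ j, B p i j = 0) ∧
      (∀ p, ∑ i, B p i 0 = -2 ∧ ∑ i, B p i 1 = 1 ∧ ∑ i, B p i 2 = 1) ∧
      Function.Injective
        (fun q : Fin ((l + 1) / 2) × Fin 2 × Fin 3 => |B q.1 q.2.1 q.2.2|) ∧
      {y : ℤ | ∃ p i j, |B p i j| = y} =
        iSet 2 (b : ℤ) ((b : ℤ) + 2 * (l : ℤ)) ∪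
        iSet 1 (x : ℤ) ((x : ℤ) + (l : ℤ)) ∪
        iSet 1 ((x : ℤ) + (b : ℤ) + (l : ℤ)) ((x : ℤ) + (b : ℤ) + 2 * (l : ℤ)) := by
  set B : Fin ((l + 1) / 2) → Matrix (Fin 2) (Fin 3) ℤ := fun p => pairMatrix b l x (2 * (p : ℕ))
  have habs (p : Fin ((l + 1) / 2)) (i : Fin 2) (j : Fin 3) :
      |B p i j| = colValue b l x (2 * (p : ℕ) + (i : ℕ)) j := by
    rw [abs_pairMatrix, abs_of_nonneg (colValue_nonneg (by positivity) (by positivity)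
      (two_mul_add_mem_Icc p i) j)]
  refine ⟨B, fun p => pairMatrix_row_sum _ _ _ _, fun p => pairMatrix_col_sums _ _ _ _, ?_, ?_⟩
  · rintro ⟨p, i, j⟩ ⟨p', i', j'⟩ h
    simp only [habs] at h
    obtain ⟨rfl, hm⟩ := colValue_inj (by exact_mod_cast hb) (by exact_mod_cast hxgt)
      (two_mul_add_mem_Icc p i) (two_mul_add_mem_Icc p' i') h
    obtain rfl : p = p' := Fin.ext (by omega)
    obtain rfl : i = i' := Fin.ext (by omega)
    rfl
  · rw [← setOf_colValue_eq]
    ext y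
    simp only [Set.mem_ofPred_eq, habs]
    constructor
    · rintro ⟨p, i, j, rfl⟩
      exact ⟨j, _, two_mul_add_mem_Icc p i, rfl⟩
    · rintro ⟨j, m, hm, rfl⟩
      obtain ⟨p, i, rfl⟩ := exists_two_mul_add_eq hlodd hm
      exact ⟨p, i, j, rfl⟩

theorem exists_B_four
    (b l x : ℕ) (hb : 0 < b) (hl : 0 < l) (hx : 0 < x)
    (hbodd : Odd b) (hlodd : Odd l) (hxgt : b + 2 * l < x) :
    ∃ B : Fin ((l + 1) / 2) → Matrix (Fin 2) (Fin 3) ℤ,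
      (∀ p i, ∑ j, B p i j = 0) ∧
      (∀ p, ∑ i, B p i 0 = -2 ∧ ∑ i, B p i 1 = 1 ∧ ∑ i, B p i 2 = 1) ∧
      Function.Injective
        (fun q : Fin ((l + 1) / 2) × Fin 2 × Fin 3 => |B q.1 q.2.1 q.2.2|) ∧
      {y : ℤ | ∃ p i j, |B p i j| = y} =
        iSet 2 (b : ℤ) ((b : ℤ) + 2 * (l : ℤ)) ∪
        iSet 1 (x : ℤ) ((x : ℤ) + (l : ℤ)) ∪
        iSet 1 ((x : ℤ) + (b : ℤ) + (l : ℤ)) ((x : ℤ) + (b : ℤ) + 2 * (l : ℤ)) :=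
  exists_B_four_general b l x hb hlodd hxgt
end
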